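/- arXiv:2206.13026 — 6 statements merged into one kernel-verified Lean document; each statement's English description precedes it below -/
import Mathlib

section
/- Let X be a T1 regular space. The following are equivalent: (1) CL(X) with the Fell topology is metrizable; (2) CL(X) with the Fell topology is a γ-space; (3) CL(X) with the Fell topology is a D_0-space; (4) K(X) with the Fell topology is a D_0-space; (5) F(X) with the Fell topology is a D_0-space; (6) F_2(X) with the Fell topology is a D_0-space; (7) X is locally compact, separable and metrizable. -/
open Set TopologicalSpace

universe u v

/-- The Fell topology on the collection of all subsets of `X`, generated by the subbase
consisting of the sets `U⁻ = {H | H ∩ U ≠ ∅}` for `U` open and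
`(Kᶜ)⁺ = {H | H ⊆ Kᶜ}` for `K` compact. -/
def fellTopology (X : Type u) [TopologicalSpace X] : TopologicalSpace (Set X) :=
  TopologicalSpace.generateFrom
    ({S | ∃ U : Set X, IsOpen U ∧ S = {H : Set X | (H ∩ U).Nonempty}} ∪
     {S | ∃ K : Set X, IsCompact K ∧ S = {H : Set X | H ⊆ Kᶜ}})

/-- The Vietoris topology on the collection of all subsets of `X`, generated by the subbase
consisting of the sets `U⁺ = {H | H ⊆ U}` and `U⁻ = {H | H ∩ U ≠ ∅}` for `U` open. -/
def vietorisTopology (X : Type u) [TopologicalSpace X] : TopologicalSpace (Set X) :=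
  TopologicalSpace.generateFrom
    ({S | ∃ U : Set X, IsOpen U ∧ S = {H : Set X | H ⊆ U}} ∪
     {S | ∃ U : Set X, IsOpen U ∧ S = {H : Set X | (H ∩ U).Nonempty}})

/-- A collection `S` of subsets of `X`, viewed as a hyperspace with the Fell topology. -/
def FellHyper (X : Type u) [TopologicalSpace X] (S : Set (Set X)) : Type u :=
  {A : Set X // A ∈ S}

/-- A collection `S` of subsets of `X`, viewed as a hyperspace with the Vietoris topology. -/
def VietorisHyper (X : Type u) [TopologicalSpace X] (S : Set (Set X)) : Type u :=
  {A : Set X // A ∈ S}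

instance FellHyper.instTopologicalSpace (X : Type u) [TopologicalSpace X] (S : Set (Set X)) :
    TopologicalSpace (FellHyper X S) :=
  TopologicalSpace.induced (Subtype.val : {A : Set X // A ∈ S} → Set X) (fellTopology X)

instance VietorisHyper.instTopologicalSpace (X : Type u) [TopologicalSpace X] (S : Set (Set X)) :
    TopologicalSpace (VietorisHyper X S) :=
  TopologicalSpace.induced (Subtype.val : {A : Set X // A ∈ S} → Set X) (vietorisTopology X)

/-- The underlying subset of `X` of a point of a Fell hyperspace. -/
def FellHyper.carrier {X : Type u} [TopologicalSpace X] {S : Set (Set X)}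
    (A : FellHyper X S) : Set X :=
  Subtype.val A

/-- The underlying subset of `X` of a point of a Vietoris hyperspace. -/
def VietorisHyper.carrier {X : Type u} [TopologicalSpace X] {S : Set (Set X)}
    (A : VietorisHyper X S) : Set X :=
  Subtype.val A

/-- `CL(X)`: the nonempty closed subsets of `X`. -/
def CL (X : Type u) [TopologicalSpace X] : Set (Set X) := {A | A.Nonempty ∧ IsClosed A}

/-- `𝒦(X)`: the nonempty compact subsets of `X`. -/
def Kcal (X : Type u) [TopologicalSpace X] : Set (Set X) := {A | A.Nonempty ∧ IsCompact A}

/-- `ℱ(X)`: the nonempty finite subsets of `X`. -/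
def Fcal (X : Type u) : Set (Set X) := {A | A.Nonempty ∧ A.Finite}

/-- `ℱₙ(X)`: the nonempty subsets of `X` with at most `n` points. -/
def Fn (X : Type u) (n : ℕ) : Set (Set X) := {A | A.Nonempty ∧ A.encard ≤ n}

/-- A space is a `D₁`-space if every nonempty closed subset has a countable
neighborhood base. -/
def IsD1Space (Y : Type v) [TopologicalSpace Y] : Prop :=
  ∀ F : Set Y, F.Nonempty → IsClosed F →
    ∃ B : ℕ → Set Y, (∀ n, IsOpen (B n) ∧ F ⊆ B n) ∧
      ∀ V : Set Y, IsOpen V → F ⊆ V → ∃ n, B n ⊆ V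

/-- A space is a `D₀`-space if every nonempty compact subset has a countable
neighborhood base. -/
def IsD0Space (Y : Type v) [TopologicalSpace Y] : Prop :=
  ∀ F : Set Y, F.Nonempty → IsCompact F →
    ∃ B : ℕ → Set Y, (∀ n, IsOpen (B n) ∧ F ⊆ B n) ∧
      ∀ V : Set Y, IsOpen V → F ⊆ V → ∃ n, B n ⊆ V

/-- A space has a `G_δ`-diagonal if the diagonal is a `G_δ`-set in `X × X`. -/
def HasGdeltaDiagonal (X : Type u) [TopologicalSpace X] : Prop :=
  ∃ U : ℕ → Set (X × X), (∀ n, IsOpen (U n)) ∧ (⋂ n, U n) = {p : X × X | p.1 = p.2}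

/-- A space is perfect if every closed subset is a `G_δ`-set. -/
def IsPerfectSpace (Y : Type v) [TopologicalSpace Y] : Prop :=
  ∀ F : Set Y, IsClosed F → ∃ U : ℕ → Set Y, (∀ n, IsOpen (U n)) ∧ F = ⋂ n, U n

/-- A space has the compact-`G_δ` property if every compact subset is a `G_δ`-set. -/
def CompactGDeltaProperty (Y : Type v) [TopologicalSpace Y] : Prop :=
  ∀ K : Set Y, IsCompact K → ∃ U : ℕ → Set Y, (∀ n, IsOpen (U n)) ∧ K = ⋂ n, U n

/-- `γ`-space. -/
def IsGammaSpace (Y : Type v) [TopologicalSpace Y] : Prop :=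
  ∃ g : ℕ → Y → Set Y,
    (∀ n y, IsOpen (g n y) ∧ y ∈ g n y) ∧
    (∀ y, ∀ V : Set Y, IsOpen V → y ∈ V → ∃ n, g n y ⊆ V) ∧
    (∀ n y, ∃ m, ∀ z ∈ g m y, g m z ⊆ g n y)

/-- A space has a `G_δ*`-diagonal if there is a sequence `𝒰 n` of open covers such that
`{x} = ⋂ n, closure (st(x, 𝒰 n))` for every `x`. -/
def HasGdeltaStarDiagonal (X : Type u) [TopologicalSpace X] : Prop :=
  ∃ 𝒰 : ℕ → Set (Set X),
    (∀ n, ∀ U ∈ 𝒰 n, IsOpen U) ∧ (∀ n, ⋃₀ 𝒰 n = univ) ∧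
    ∀ x : X, (⋂ n, closure (⋃₀ {U ∈ 𝒰 n | x ∈ U})) = {x}


/-!
Metrizable spaces are `γ`-spaces (balls of radius `2⁻ⁿ`), `γ`-spaces are `D₀`-spaces (finite
unions of `γ`-neighbourhoods over a finite subcover), and the `D₀` property passes to the
subspaces `ℱ₂(X) ⊆ ℱ(X) ⊆ 𝒦(X) ⊆ CL(X)`.

If `ℱ₂(X)` is `D₀`, fix a countable base at `{x}`. Since `{x, z} → {x}` as `z` leaves compact
sets, every compact set missing `x` lies in one of countably many compact sets `Kₙ`. This makes
`X` σ-compact, and locally compact: otherwise a sequence tending to `y` and avoiding every `Kₙ`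
would, together with `y`, be a compact set missing `x` in no `Kₙ`. For compact `C`, the countable
base at `{{z} | z ∈ C}` pulls back along `(z, w) ↦ {z, w}` to a countable base at the diagonal of
`C × C`, so the uniformity of `C` is countably generated and `C` is metrizable. Covering `X` by
countably many such `C` shows that `X` is second countable, hence metrizable by Urysohn.

Conversely, if `X` is locally compact and second countable, then `CL(X)` is `T₀`, regular
(`U⁻` is closed for compact `U` and `(Kᶜ)⁺` for open `K`, so compact neighbourhoods in `X` give
closed neighbourhoods in `CL(X)`), and second countable (the sets `U⁻` and `(closure Uᶜ)⁺` for `U`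
in a countable basis form a subbase), hence metrizable.
-/

open Filter Topology

section D0
variable {Y : Type*} [TopologicalSpace Y]

theorem isD0Space_iff_isCountablyGenerated_nhdsSet :
    IsD0Space Y ↔ ∀ F : Set Y, F.Nonempty → IsCompact F → (𝓝ˢ F).IsCountablyGenerated := by
  refine forall₃_congr fun F _ _ => ⟨fun ⟨B, hBF, hBbase⟩ => ?_, fun h => ?_⟩
  · refine HasBasis.isCountablyGenerated (p := fun _ : ℕ => True) (s := B) ⟨fun t => ?_⟩
    refine ⟨fun ht => ?_, fun ⟨n, _, hn⟩ => mem_of_superset ((hBF n).1.mem_nhdsSet.2 (hBF n).2) hn⟩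
    obtain ⟨U, ⟨hU, hFU⟩, hUt⟩ := (hasBasis_nhdsSet F).mem_iff.1 ht
    obtain ⟨n, hn⟩ := hBbase U hU hFU
    exact ⟨n, trivial, hn.trans hUt⟩
  · obtain ⟨s, hs⟩ := (𝓝ˢ F).exists_antitone_basis
    refine ⟨fun n => interior (s n), fun n => ⟨isOpen_interior,
      subset_interior_iff_mem_nhdsSet.2 (hs.mem n)⟩, fun V hV hFV => ?_⟩
    obtain ⟨n, hn⟩ := hs.mem_iff.1 (hV.mem_nhdsSet.2 hFV)
    exact ⟨n, interior_subset.trans hn⟩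

theorem IsD0Space.isCountablyGenerated_nhdsSet (h : IsD0Space Y) {F : Set Y}
    (hF : IsCompact F) : (𝓝ˢ F).IsCountablyGenerated := by
  rcases F.eq_empty_or_nonempty with rfl | hne
  · rw [nhdsSet_empty]
    exact isCountablyGenerated_bot
  · exact isD0Space_iff_isCountablyGenerated_nhdsSet.1 h F hne hF

theorem IsD0Space.isCountablyGenerated_nhds (h : IsD0Space Y) (y : Y) :
    (𝓝 y).IsCountablyGenerated := by
  simpa only [nhdsSet_singleton] using h.isCountablyGenerated_nhdsSet isCompact_singleton

theorem IsD0Space.of_isInducing {Z : Type*} [TopologicalSpace Z] {f : Z → Y}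
    (hf : IsInducing f) (h : IsD0Space Y) : IsD0Space Z := by
  refine isD0Space_iff_isCountablyGenerated_nhdsSet.2 fun F _ hF => ?_
  rw [hf.nhdsSet_eq_comap]
  have := h.isCountablyGenerated_nhdsSet (hF.image hf.continuous)
  infer_instance

theorem isGammaSpace_of_metrizableSpace [MetrizableSpace Y] : IsGammaSpace Y := by
  let : MetricSpace Y := metrizableSpaceMetric Y
  refine ⟨fun n y => Metric.ball y ((1 / 2) ^ n),
    fun n y => ⟨Metric.isOpen_ball, Metric.mem_ball_self (by positivity)⟩, ?_, ?_⟩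
  · intro y V hV hyV
    obtain ⟨ε, hε, hball⟩ := Metric.isOpen_iff.1 hV y hyV
    obtain ⟨n, hn⟩ := exists_pow_lt_of_lt_one hε (by norm_num : (1 : ℝ) / 2 < 1)
    exact ⟨n, (Metric.ball_subset_ball hn.le).trans hball⟩
  · refine fun n y => ⟨n + 1, fun z hz w hw => ?_⟩
    calc dist w y ≤ dist w z + dist z y := dist_triangle _ _ _
      _ < (1 / 2) ^ (n + 1) + (1 / 2) ^ (n + 1) := add_lt_add hw hz
      _ = (1 / 2) ^ n := by ring

theorem IsGammaSpace.exists_antitone (h : IsGammaSpace Y) :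
    ∃ g : ℕ → Y → Set Y,
      (∀ n y, IsOpen (g n y) ∧ y ∈ g n y) ∧
      (∀ y, ∀ V : Set Y, IsOpen V → y ∈ V → ∃ n, g n y ⊆ V) ∧
      (∀ n y, ∃ m, ∀ z ∈ g m y, g m z ⊆ g n y) ∧
      ∀ y, Antitone (g · y) := by
  obtain ⟨g, hg, hbase, hγ⟩ := h
  refine ⟨fun n y => ⋂ i ≤ n, g i y, fun n y => ⟨?_, mem_iInter₂.2 fun i _ => (hg i y).2⟩,
    ?_, ?_, fun y m n hmn => biInter_mono (Iic_subset_Iic.2 hmn) fun _ _ => subset_rfl⟩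
  · exact (finite_Iic n).isOpen_biInter fun i _ => (hg i y).1
  · intro y V hV hyV
    obtain ⟨n, hn⟩ := hbase y V hV hyV
    exact ⟨n, fun z hz => hn (mem_iInter₂.1 hz n le_rfl)⟩
  · intro n y
    choose m hm using fun i => hγ i y
    refine ⟨(Finset.Iic n).sup m, fun z hz w hw => mem_iInter₂.2 fun i hi => ?_⟩
    have hmi : m i ≤ (Finset.Iic n).sup m := Finset.le_sup (Finset.mem_Iic.2 hi)
    exact hm i z (mem_iInter₂.1 hz (m i) hmi) (mem_iInter₂.1 hw (m i) hmi)

theorem IsGammaSpace.isD0Space (h : IsGammaSpace Y) : IsD0Space Y := by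
  obtain ⟨g, hg, hbase, hγ, hanti⟩ := h.exists_antitone
  intro F _ hF
  refine ⟨fun n => ⋃ y ∈ F, g n y, fun n => ⟨isOpen_biUnion fun y _ => (hg n y).1,
    fun y hy => mem_biUnion hy (hg n y).2⟩, fun V hV hFV => ?_⟩
  choose n hn using fun y (hy : y ∈ F) => hbase y V hV (hFV hy)
  choose m hm using fun y (hy : y ∈ F) => hγ (n y hy) y
  obtain ⟨t, hcov⟩ := hF.elim_nhds_subcover' (fun y hy => g (m y hy) y)
    fun y hy => (hg _ y).1.mem_nhds (hg _ y).2
  refine ⟨t.sup fun y => m y.1 y.2, iUnion₂_subset fun w hw z hz => ?_⟩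
  obtain ⟨⟨y, hy⟩, hyt, hwy⟩ := mem_iUnion₂.1 (hcov hw)
  have hle : m y hy ≤ t.sup fun y => m y.1 y.2 := Finset.le_sup (f := fun y => m y.1 y.2) hyt
  exact hn y hy (hm y hy w hwy (hanti w hle hz))

end D0

section HitMiss
variable {X : Type*}

-- The subbasic sets `U⁻` and `(Kᶜ)⁺` of the Fell topology.
def hits (U : Set X) : Set (Set X) := {H | (H ∩ U).Nonempty}

def misses (K : Set X) : Set (Set X) := {H | H ⊆ Kᶜ}

theorem compl_hits (U : Set X) : (hits U)ᶜ = misses U := by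
  ext H
  simp [hits, misses, not_nonempty_iff_eq_empty, subset_compl_iff_disjoint_right,
    disjoint_iff_inter_eq_empty]

theorem hits_mono {U V : Set X} (h : U ⊆ V) : hits U ⊆ hits V :=
  fun _ hH => hH.mono (inter_subset_inter_right _ h)

theorem misses_anti {K L : Set X} (h : K ⊆ L) : misses L ⊆ misses K :=
  fun _ hH => hH.trans (compl_subset_compl.2 h)

end HitMiss

section Fell
variable {X : Type u} [TopologicalSpace X]
attribute [local instance] fellTopology

theorem isOpen_hits {U : Set X} (hU : IsOpen U) : IsOpen (hits U) :=
  .basic _ (.inl ⟨U, hU, rfl⟩)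

theorem isOpen_misses {K : Set X} (hK : IsCompact K) : IsOpen (misses K) :=
  .basic _ (.inr ⟨K, hK, rfl⟩)

theorem isClosed_hits {K : Set X} (hK : IsCompact K) : IsClosed (hits K) := by
  rw [← isOpen_compl_iff, compl_hits]
  exact isOpen_misses hK

theorem isClosed_misses {U : Set X} (hU : IsOpen U) : IsClosed (misses U) := by
  rw [← isOpen_compl_iff, ← compl_hits, compl_compl]
  exact isOpen_hits hU

theorem tendsto_fell_nhds_iff {α : Type*} {f : α → Set X} {l : Filter α} {A : Set X} :
    Tendsto f l (𝓝 A) ↔ (∀ U, IsOpen U → A ∈ hits U → ∀ᶠ a in l, f a ∈ hits U) ∧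
      ∀ K, IsCompact K → A ∈ misses K → ∀ᶠ a in l, f a ∈ misses K := by
  refine tendsto_nhds_generateFrom_iff.trans ⟨fun h => ⟨fun U hU => h _ (.inl ⟨U, hU, rfl⟩),
    fun K hK => h _ (.inr ⟨K, hK, rfl⟩)⟩, ?_⟩
  rintro ⟨hhits, hmisses⟩ _ (⟨U, hU, rfl⟩ | ⟨K, hK, rfl⟩)
  exacts [hhits U hU, hmisses K hK]

theorem FellHyper.isInducing_val (S : Set (Set X)) :
    IsInducing (Subtype.val : FellHyper X S → Set X) :=
  ⟨rfl⟩

theorem FellHyper.isInducing_inclusion {S T : Set (Set X)} (hTS : T ⊆ S) :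
    IsInducing (Set.inclusion hTS : FellHyper X T → FellHyper X S) :=
  (isInducing_val S).of_comp_iff.1 (isInducing_val T)

theorem IsD0Space.fellHyper_anti {S T : Set (Set X)} (hTS : T ⊆ S)
    (h : IsD0Space (FellHyper X S)) : IsD0Space (FellHyper X T) :=
  h.of_isInducing (FellHyper.isInducing_inclusion hTS)

omit [TopologicalSpace X] in
theorem Fn_two_subset_Fcal : Fn X 2 ⊆ Fcal X :=
  fun _ ⟨hne, hcard⟩ => ⟨hne, finite_of_encard_le_coe hcard⟩

theorem Fcal_subset_Kcal : Fcal X ⊆ Kcal X :=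
  fun _ ⟨hne, hfin⟩ => ⟨hne, hfin.isCompact⟩

theorem Kcal_subset_CL [T2Space X] : Kcal X ⊆ CL X :=
  fun _ ⟨hne, hK⟩ => ⟨hne, hK.isClosed⟩

end Fell

theorem secondCountableTopology_of_eq_induced_generateFrom {α β : Type*} [t : TopologicalSpace α]
    (f : α → β) {g g₀ : Set (Set β)} (ht : t = induced f (generateFrom g)) (hg₀c : g₀.Countable)
    (hg₀ : g₀ ⊆ g) (h : ∀ a, ∀ s ∈ g, f a ∈ s → ∃ F ⊆ g₀, F.Finite ∧ f a ∈ ⋂₀ F ∧ ⋂₀ F ⊆ s) :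
    SecondCountableTopology α := by
  let := generateFrom g₀
  have : SecondCountableTopology β := ⟨⟨g₀, hg₀c, rfl⟩⟩
  refine IsInducing.secondCountableTopology (f := f) ⟨ht.trans ?_⟩
  refine le_antisymm (induced_mono (generateFrom_anti hg₀)) ?_
  refine (le_generateFrom ?_).trans_eq induced_generateFrom_eq.symm
  rintro _ ⟨s, hs, rfl⟩
  let := induced f ‹TopologicalSpace β›
  refine isOpen_iff_forall_mem_open.2 fun a ha => ?_
  obtain ⟨F, hFg₀, hFfin, haF, hFs⟩ := h a s hs ha
  exact ⟨f ⁻¹' ⋂₀ F, preimage_mono hFs,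
    isOpen_induced (hFfin.isOpen_sInter fun t ht => .basic t (hFg₀ ht)), haF⟩

theorem exists_finite_cover_compact_closure_subset {X : Type*} [TopologicalSpace X] [T2Space X]
    [LocallyCompactSpace X] {b : Set (Set X)} (hb : IsTopologicalBasis b) {K W : Set X}
    (hK : IsCompact K) (hW : IsOpen W) (hKW : K ⊆ W) :
    ∃ F ⊆ {U ∈ b | IsCompact (closure U) ∧ closure U ⊆ W}, F.Finite ∧ K ⊆ ⋃₀ F := by
  have hcover : K ⊆ ⋃ U ∈ {U ∈ b | IsCompact (closure U) ∧ closure U ⊆ W}, U := by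
    intro x hx
    obtain ⟨L, hL, hxL, hLW⟩ := exists_compact_subset hW (hKW hx)
    obtain ⟨U, hUb, hxU, hUL⟩ := hb.exists_subset_of_mem_open hxL isOpen_interior
    have hUL' : closure U ⊆ L := closure_minimal (hUL.trans interior_subset) hL.isClosed
    exact mem_biUnion ⟨hUb, hL.of_isClosed_subset isClosed_closure hUL', hUL'.trans hLW⟩ hxU
  obtain ⟨F, hFsub, hFfin, hKF⟩ :=
    hK.elim_finite_subcover_image (fun U hU => hb.isOpen hU.1) hcover
  exact ⟨F, hFsub, hFfin, by rwa [sUnion_eq_biUnion]⟩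

section Metrizable
variable {X : Type u} [TopologicalSpace X]
attribute [local instance] fellTopology

theorem FellHyper.regularSpace_CL [LocallyCompactSpace X] : RegularSpace (FellHyper X (CL X)) := by
  refine .of_lift'_closure_le fun A => (isInducing_val _).tendsto_nhds_iff.2 ?_
  have hval := (isInducing_val (CL X)).continuous
  have hclosed_nhd : ∀ N T : Set (Set X), IsOpen N → IsClosed T → A.1 ∈ N → N ⊆ T →
      Subtype.val ⁻¹' T ∈ (𝓝 A).lift' closure := fun N T hN hT hAN hNT =>
    (mem_lift'_sets (monotone_closure _)).2 ⟨_, (hN.preimage hval).mem_nhds hAN,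
      closure_minimal (preimage_mono hNT) (hT.preimage hval)⟩
  refine tendsto_fell_nhds_iff.2 ⟨fun U hU ⟨x, hxA, hxU⟩ => ?_, fun K hK hAK => ?_⟩
  · obtain ⟨C, hC, hxC, hCU⟩ := exists_compact_subset hU hxU
    exact mem_of_superset (hclosed_nhd _ _ (isOpen_hits isOpen_interior) (isClosed_hits hC)
      ⟨x, hxA, hxC⟩ (hits_mono interior_subset)) (preimage_mono (hits_mono hCU))
  · obtain ⟨D, hD, hKD, hDA⟩ :=
      exists_compact_between hK A.2.2.isOpen_compl (subset_compl_comm.1 hAK)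
    exact mem_of_superset (hclosed_nhd _ _ (isOpen_misses hD) (isClosed_misses isOpen_interior)
      (subset_compl_comm.1 hDA) (misses_anti interior_subset)) (preimage_mono (misses_anti hKD))

theorem FellHyper.t0Space_CL : T0Space (FellHyper X (CL X)) := by
  have hsubset : ∀ A B : FellHyper X (CL X), Inseparable A B → A.1 ⊆ B.1 := by
    intro A B hAB x hxA
    by_contra hxB
    obtain ⟨y, hyB, hyB'⟩ := (hAB.mem_open_iff
      ((isOpen_hits B.2.2.isOpen_compl).preimage (isInducing_val _).continuous)).1 ⟨x, hxA, hxB⟩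
    exact hyB' hyB
  exact (t0Space_iff_inseparable _).2 fun A B hAB =>
    Subtype.ext ((hsubset A B hAB).antisymm (hsubset B A hAB.symm))

theorem FellHyper.secondCountableTopology_CL [T2Space X] [LocallyCompactSpace X]
    [SecondCountableTopology X] : SecondCountableTopology (FellHyper X (CL X)) := by
  obtain ⟨b, hbc, -, hb⟩ := exists_countable_basis X
  set g₀ : Set (Set (Set X)) :=
    hits '' b ∪ misses '' {C ∈ closure '' b | IsCompact C}
  have hg₀c : g₀.Countable := (hbc.image _).union (((hbc.image _).mono (sep_subset _ _)).image _)
  refine secondCountableTopology_of_eq_induced_generateFrom Subtype.val rfl hg₀c ?_ ?_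
  · rintro _ (⟨U, hU, rfl⟩ | ⟨C, ⟨-, hC⟩, rfl⟩)
    exacts [.inl ⟨U, hb.isOpen hU, rfl⟩, .inr ⟨C, hC, rfl⟩]
  rintro A _ (⟨U, hU, rfl⟩ | ⟨K, hK, rfl⟩) hA
  · obtain ⟨x, hxA, hxU⟩ := hA
    obtain ⟨V, hVb, hxV, hVU⟩ := hb.exists_subset_of_mem_open hxU hU
    refine ⟨{hits V}, singleton_subset_iff.2 (.inl ⟨V, hVb, rfl⟩), finite_singleton _, ?_, ?_⟩
    · rw [sInter_singleton]; exact ⟨x, hxA, hxV⟩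
    · rw [sInter_singleton]; exact hits_mono hVU
  · obtain ⟨F, hFsub, hFfin, hKF⟩ := exists_finite_cover_compact_closure_subset hb hK
      A.2.2.isOpen_compl (subset_compl_comm.1 hA)
    refine ⟨(misses ∘ closure) '' F, ?_, hFfin.image _, ?_, ?_⟩
    · rintro _ ⟨U, hU, rfl⟩
      exact .inr ⟨closure U, ⟨⟨U, (hFsub hU).1, rfl⟩, (hFsub hU).2.1⟩, rfl⟩
    · rw [sInter_image]
      exact mem_iInter₂.2 fun U hU => subset_compl_comm.1 (hFsub hU).2.2
    · rw [sInter_image]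
      intro H hH x hxH hxK
      obtain ⟨U, hUF, hxU⟩ := hKF hxK
      exact mem_iInter₂.1 hH U hUF hxH (subset_closure hxU)

theorem FellHyper.metrizableSpace_CL [LocallyCompactSpace X] [SeparableSpace X]
    [MetrizableSpace X] : MetrizableSpace (FellHyper X (CL X)) := by
  have : SecondCountableTopology X := by
    let : MetricSpace X := metrizableSpaceMetric X
    exact UniformSpace.secondCountable_of_separable X
  have := FellHyper.regularSpace_CL (X := X)
  have := FellHyper.t0Space_CL (X := X)
  have := FellHyper.secondCountableTopology_CL (X := X)
  exact metrizableSpace_of_t3_secondCountable _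

end Metrizable

theorem metrizableSpace_of_isCountablyGenerated_nhdsSet_diagonal {Y : Type*} [TopologicalSpace Y]
    [CompactSpace Y] [T2Space Y] (h : (𝓝ˢ (diagonal Y)).IsCountablyGenerated) :
    MetrizableSpace Y := by
  let := uniformSpaceOfCompactR1 (γ := Y)
  exact @UniformSpace.metrizableSpace Y _ h _

theorem pair_mem_Fn_two {X : Type*} (x z : X) : ({x, z} : Set X) ∈ Fn X 2 :=
  ⟨insert_nonempty x {z}, (encard_insert_le _ _).trans (by simp [one_add_one_eq_two])⟩

section Pairs
variable {X : Type u} [TopologicalSpace X]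
attribute [local instance] fellTopology

def pairFn2 (x z : X) : FellHyper X (Fn X 2) := ⟨{x, z}, pair_mem_Fn_two x z⟩

theorem continuous_pairFn2 [T2Space X] : Continuous fun p : X × X => pairFn2 p.1 p.2 := by
  refine (FellHyper.isInducing_val _).continuous_iff.2 <| continuous_iff_continuousAt.2
    fun p => tendsto_fell_nhds_iff.2 ⟨fun U hU ⟨x, hxp, hxU⟩ => ?_, fun K hK hpK => ?_⟩
  · rcases hxp with rfl | rfl
    · filter_upwards [continuous_fst.continuousAt.preimage_mem_nhds (hU.mem_nhds hxU)] with q hq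
      exact ⟨q.1, mem_insert _ _, hq⟩
    · filter_upwards [continuous_snd.continuousAt.preimage_mem_nhds (hU.mem_nhds hxU)] with q hq
      exact ⟨q.2, mem_insert_of_mem _ rfl, hq⟩
  · have hKc := hK.isClosed.isOpen_compl
    filter_upwards [continuous_fst.continuousAt.preimage_mem_nhds (hKc.mem_nhds (hpK (.inl rfl))),
      continuous_snd.continuousAt.preimage_mem_nhds (hKc.mem_nhds (hpK (.inr rfl)))] with q h₁ h₂
    exact insert_subset h₁ (singleton_subset_iff.2 h₂)

theorem isInducing_pairFn2_self [T2Space X] : IsInducing fun x : X => pairFn2 x x := by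
  refine ⟨le_antisymm (continuous_iff_le_induced.1 <|
    continuous_pairFn2.comp (continuous_id.prodMk continuous_id)) fun U hU => ?_⟩
  refine ⟨Subtype.val ⁻¹' hits U, (isOpen_hits hU).preimage continuous_subtype_val, ?_⟩
  ext x
  refine ⟨fun ⟨y, hy, hyU⟩ => ?_, fun hxU => ⟨x, mem_insert _ _, hxU⟩⟩
  rcases hy with rfl | rfl <;> exact hyU

theorem tendsto_pairFn2_cocompact (x : X) :
    Tendsto (pairFn2 x) (cocompact X) (𝓝 (pairFn2 x x)) := by
  refine (FellHyper.isInducing_val _).tendsto_nhds_iff.2 <| tendsto_fell_nhds_iff.2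
    ⟨fun U _ ⟨_, hx, hxU⟩ => .of_forall fun z => ⟨x, mem_insert _ _, ?_⟩, fun K hK hxK => ?_⟩
  · rcases hx with rfl | rfl <;> exact hxU
  · filter_upwards [hK.compl_mem_cocompact] with z hz
    exact insert_subset (hxK (.inl rfl)) (singleton_subset_iff.2 hz)

theorem exists_compact_seq_forall_subset (h : IsD0Space (FellHyper X (Fn X 2))) (x : X) :
    ∃ K : ℕ → Set X, (∀ n, IsCompact (K n)) ∧
      ∀ L, IsCompact L → x ∉ L → ∃ n, L ⊆ K n := by
  have := h.isCountablyGenerated_nhds (pairFn2 x x)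
  obtain ⟨B, hB⟩ := (𝓝 (pairFn2 x x)).exists_antitone_basis
  choose K hK hKB using fun n => mem_cocompact.1 (tendsto_pairFn2_cocompact x (hB.mem n))
  refine ⟨K, hK, fun L hL hxL => ?_⟩
  have hmisses : Subtype.val ⁻¹' misses L ∈ 𝓝 (pairFn2 x x) :=
    ((isOpen_misses hL).preimage continuous_subtype_val).mem_nhds
      (by simpa [pairFn2, misses] using hxL)
  obtain ⟨n, hn⟩ := hB.mem_iff.1 hmisses
  refine ⟨n, fun z hzL => by_contra fun hzK => ?_⟩
  exact hn (hKB n hzK) (mem_insert_of_mem _ rfl) hzL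

variable (h : IsD0Space (FellHyper X (Fn X 2)))
include h

theorem weaklyLocallyCompactSpace_of_isD0Space_Fn_two [T2Space X] :
    WeaklyLocallyCompactSpace X := by
  rcases subsingleton_or_nontrivial X with _ | _
  · infer_instance
  refine ⟨fun y => ?_⟩
  obtain ⟨x, hxy⟩ := exists_ne y
  obtain ⟨K, hK, hKdom⟩ := exists_compact_seq_forall_subset h x
  have := (h.of_isInducing isInducing_pairFn2_self).isCountablyGenerated_nhds y
  obtain ⟨V, hV⟩ := (𝓝 y).exists_antitone_basis
  by_contra! hnot
  have hz : ∀ n, ∃ z ∈ V n, z ≠ x ∧ z ∉ K n := by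
    intro n
    by_contra! hsub
    exact hnot _ ((hK n).insert x) (mem_of_superset (hV.mem n) fun z hz =>
      or_iff_not_imp_left.2 (hsub z hz))
  choose z hzV hzx hzK using hz
  have hzy : Tendsto z atTop (𝓝 y) := hV.tendsto hzV
  obtain ⟨n, hn⟩ := hKdom _ hzy.isCompact_insert_range (by
    rintro (rfl | ⟨n, hn⟩)
    exacts [hxy rfl, hzx n hn])
  exact hzK n (hn (mem_insert_of_mem _ ⟨n, rfl⟩))

theorem sigmaCompactSpace_of_isD0Space_Fn_two : SigmaCompactSpace X := by
  rcases isEmpty_or_nonempty X with _ | ⟨⟨x⟩⟩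
  · infer_instance
  obtain ⟨K, hK, hKdom⟩ := exists_compact_seq_forall_subset h x
  refine ⟨⟨fun n => insert x (K n), fun n => (hK n).insert x, eq_univ_of_forall fun y => ?_⟩⟩
  rcases eq_or_ne y x with rfl | hyx
  · exact mem_iUnion.2 ⟨0, mem_insert _ _⟩
  · obtain ⟨n, hn⟩ := hKdom {y} isCompact_singleton hyx.symm
    exact mem_iUnion.2 ⟨n, mem_insert_of_mem _ (hn rfl)⟩

theorem isCountablyGenerated_nhdsSet_diagonal [T2Space X] {C : Set X} (hC : IsCompact C) :
    (𝓝ˢ (diagonal C)).IsCountablyGenerated := by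
  set q : C × C → FellHyper X (Fn X 2) := fun p => pairFn2 p.1 p.2
  have hq : Continuous q :=
    continuous_pairFn2.comp (continuous_subtype_val.prodMap continuous_subtype_val)
  have := h.isCountablyGenerated_nhdsSet (hC.image isInducing_pairFn2_self.continuous)
  suffices 𝓝ˢ (diagonal C) = comap q (𝓝ˢ ((fun x => pairFn2 x x) '' C)) by
    rw [this]
    infer_instance
  refine le_antisymm (tendsto_iff_comap.1 (hq.tendsto_nhdsSet ?_)) ?_
  · rintro ⟨z, w⟩ (rfl : z = w)
    exact ⟨z, z.2, rfl⟩
  -- `O ⊇ diagonal C` contains the preimage of `⋃ u, ((C \ W u)ᶜ)⁺`, where `W u × W u` is a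
  -- neighbourhood of `(u, u)` inside `O`.
  refine (hasBasis_nhdsSet _).ge_iff.2 fun O ⟨hO, hdiag⟩ => ?_
  have hW : ∀ u : C, ∃ W, IsOpen W ∧ (u : X) ∈ W ∧
      ∀ z w : C, (z : X) ∈ W → (w : X) ∈ W → (z, w) ∈ O := by
    intro u
    obtain ⟨t, ht, htO⟩ := mem_prod_self_iff.1 <|
      (nhds_prod_eq (x := u) (y := u)) ▸ hO.mem_nhds (hdiag rfl)
    obtain ⟨W, ⟨huW, hW⟩, hWt⟩ :=
      ((nhds_basis_opens (u : X)).comap Subtype.val).mem_iff.1 (by rwa [← nhds_subtype])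
    exact ⟨W, hW, huW, fun z w hz hw => htO ⟨hWt hz, hWt hw⟩⟩
  choose W hWo huW hWO using hW
  refine mem_comap.2 ⟨⋃ u : C, Subtype.val ⁻¹' misses (C \ W u), (isOpen_iUnion fun u =>
    (isOpen_misses (hC.diff (hWo u))).preimage continuous_subtype_val).mem_nhdsSet.2 ?_, ?_⟩
  · rintro _ ⟨z, hz, rfl⟩
    refine mem_iUnion.2 ⟨⟨z, hz⟩, insert_subset (fun hz' => hz'.2 (huW _)) ?_⟩
    exact singleton_subset_iff.2 fun hz' => hz'.2 (huW _)
  · rintro ⟨z, w⟩ hzw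
    obtain ⟨u, hu⟩ := mem_iUnion.1 hzw
    exact hWO u z w (not_not.1 fun hz => hu (mem_insert _ _) ⟨z.2, hz⟩)
      (not_not.1 fun hw => hu (mem_insert_of_mem _ rfl) ⟨w.2, hw⟩)

theorem secondCountableTopology_of_isD0Space_Fn_two [T2Space X] : SecondCountableTopology X := by
  have := weaklyLocallyCompactSpace_of_isD0Space_Fn_two h
  have := sigmaCompactSpace_of_isD0Space_Fn_two h
  let K := CompactExhaustion.choice X
  have (n : ℕ) : SecondCountableTopology (interior (K n)) := by
    have := isCompact_iff_compactSpace.1 (K.isCompact n)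
    have := metrizableSpace_of_isCountablyGenerated_nhdsSet_diagonal
      (isCountablyGenerated_nhdsSet_diagonal h (K.isCompact n))
    exact (IsEmbedding.inclusion interior_subset).secondCountableTopology
  refine secondCountableTopology_of_countable_cover (U := fun n => interior (K n))
    (fun n => isOpen_interior) (eq_univ_of_forall fun x => ?_)
  obtain ⟨n, hn⟩ := K.exists_mem x
  exact mem_iUnion.2 ⟨n + 1, K.subset_interior_succ n hn⟩

theorem locallyCompact_separable_metrizable_of_isD0Space_Fn_two [T1Space X] [RegularSpace X] :
    LocallyCompactSpace X ∧ SeparableSpace X ∧ MetrizableSpace X := by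
  have := weaklyLocallyCompactSpace_of_isD0Space_Fn_two h
  have := secondCountableTopology_of_isD0Space_Fn_two h
  exact ⟨inferInstance, inferInstance, metrizableSpace_of_t3_secondCountable X⟩

end Pairs

/-- characterization of spaces whose Fell hyperspaces are `D₀`-spaces. -/
theorem statement12 (X : Type u) [TopologicalSpace X] [T1Space X] [RegularSpace X] :
    List.TFAE
      [TopologicalSpace.MetrizableSpace (FellHyper X (CL X)),
       IsGammaSpace (FellHyper X (CL X)),
       IsD0Space (FellHyper X (CL X)),
       IsD0Space (FellHyper X (Kcal X)),
       IsD0Space (FellHyper X (Fcal X)),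
       IsD0Space (FellHyper X (Fn X 2)),
       LocallyCompactSpace X ∧ TopologicalSpace.SeparableSpace X ∧
         TopologicalSpace.MetrizableSpace X] := by
  tfae_have 1 → 2 := fun _ => isGammaSpace_of_metrizableSpace
  tfae_have 2 → 3 := IsGammaSpace.isD0Space
  tfae_have 3 → 4 := IsD0Space.fellHyper_anti Kcal_subset_CL
  tfae_have 4 → 5 := IsD0Space.fellHyper_anti Fcal_subset_Kcal
  tfae_have 5 → 6 := IsD0Space.fellHyper_anti Fn_two_subset_Fcal
  tfae_have 6 → 7 := fun h => locallyCompact_separable_metrizable_of_isD0Space_Fn_two h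
  tfae_have 7 → 1 := fun ⟨_, _, _⟩ => FellHyper.metrizableSpace_CL
  tfae_finish
end

section
/- Let X be a T1 regular space. The hyperspace K(X) of nonempty compact subsets of X with the Vietoris topology has the compact-G_δ property if and only if X has the compact-G_δ property and every compact subset of X is metrizable. -/
open Set TopologicalSpace

universe u v

open Topology

section Helpers

variable {X : Type u} [TopologicalSpace X]

/-- The subbasis generating the Vietoris topology. -/
def vSub (X : Type u) [TopologicalSpace X] : Set (Set (Set X)) :=
  {S | ∃ U : Set X, IsOpen U ∧ S = {H : Set X | H ⊆ U}} ∪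
  {S | ∃ U : Set X, IsOpen U ∧ S = {H : Set X | (H ∩ U).Nonempty}}

lemma vietorisTopology_eq (X : Type u) [TopologicalSpace X] :
    vietorisTopology X = TopologicalSpace.generateFrom (vSub X) := rfl

/-- In a generated topology, every point of an open set has a basic (finite intersection)
neighborhood inside the open set. -/
lemma generateOpen_exists_finite_sInter {α : Type*} {g : Set (Set α)} {O : Set α}
    (h : TopologicalSpace.GenerateOpen g O) :
    ∀ x ∈ O, ∃ f : Set (Set α), f.Finite ∧ f ⊆ g ∧ x ∈ ⋂₀ f ∧ ⋂₀ f ⊆ O := by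
  induction h with
  | basic s hs =>
      intro x hx
      exact ⟨{s}, finite_singleton s, singleton_subset_iff.2 hs, by simpa using hx, by simp⟩
  | univ =>
      intro x _
      exact ⟨∅, finite_empty, empty_subset _, by simp, by simp⟩
  | inter s t _ _ ihs iht =>
      intro x hx
      obtain ⟨fs, hfs, hfsg, hxs, hss⟩ := ihs x hx.1
      obtain ⟨ft, hft, hftg, hxt, hts⟩ := iht x hx.2
      refine ⟨fs ∪ ft, hfs.union hft, union_subset hfsg hftg, ?_, ?_⟩
      · rw [sInter_union]; exact ⟨hxs, hxt⟩
      · rw [sInter_union]; exact fun y hy => ⟨hss hy.1, hts hy.2⟩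
  | sUnion S _ ih =>
      intro x hx
      obtain ⟨s, hsS, hxs⟩ := hx
      obtain ⟨f, hf, hfg, hxf, hfs⟩ := ih s hsS x hxs
      exact ⟨f, hf, hfg, hxf, hfs.trans (subset_sUnion_of_mem hsS)⟩

lemma isOpen_hyperP {S : Set (Set X)} {U : Set X} (hU : IsOpen U) :
    IsOpen {B : VietorisHyper X S | B.1 ⊆ U} := by
  have : IsOpen[vietorisTopology X] {H : Set X | H ⊆ U} :=
    TopologicalSpace.GenerateOpen.basic _ (Or.inl ⟨U, hU, rfl⟩)
  exact isOpen_induced (t := vietorisTopology X) this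

lemma isOpen_hyperM {S : Set (Set X)} {U : Set X} (hU : IsOpen U) :
    IsOpen {B : VietorisHyper X S | (B.1 ∩ U).Nonempty} := by
  have : IsOpen[vietorisTopology X] {H : Set X | (H ∩ U).Nonempty} :=
    TopologicalSpace.GenerateOpen.basic _ (Or.inr ⟨U, hU, rfl⟩)
  exact isOpen_induced (t := vietorisTopology X) this

end Helpers
section LemmaA

variable {X : Type u} [TopologicalSpace X]

lemma setOf_subset_inj {U V : Set X} (h : {H : Set X | H ⊆ U} = {H : Set X | H ⊆ V}) : U = V := by
  have h1 : U ∈ {H : Set X | H ⊆ U} := mem_setOf_eq ▸ subset_rfl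
  have h2 : V ∈ {H : Set X | H ⊆ V} := mem_setOf_eq ▸ subset_rfl
  rw [h] at h1; rw [← h] at h2
  exact subset_antisymm h1 h2

lemma setOf_meets_inj {U V : Set X} (h : {H : Set X | (H ∩ U).Nonempty} =
    {H : Set X | (H ∩ V).Nonempty}) : U = V := by
  ext x
  constructor
  · intro hx
    have h1 : ({x} : Set X) ∈ {H : Set X | (H ∩ U).Nonempty} := ⟨x, rfl, hx⟩
    rw [h] at h1
    obtain ⟨y, hy1, hy2⟩ := h1
    rwa [mem_singleton_iff.1 hy1] at hy2
  · intro hx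
    have h1 : ({x} : Set X) ∈ {H : Set X | (H ∩ V).Nonempty} := ⟨x, rfl, hx⟩
    rw [← h] at h1
    obtain ⟨y, hy1, hy2⟩ := h1
    rwa [mem_singleton_iff.1 hy1] at hy2

/-- Normal form for Vietoris neighborhoods: every open neighborhood of `A` in the hyperspace
contains a "basic" neighborhood described by one open set `U` (containment part) and finitely
many open sets `𝒱` (hitting part). -/
lemma vietoris_mem_nhds {S : Set (Set X)} {O : Set (VietorisHyper X S)} (hO : IsOpen O)
    {A : VietorisHyper X S} (hA : A ∈ O) :
    ∃ (U : Set X) (𝒱 : Set (Set X)), IsOpen U ∧ 𝒱.Finite ∧ (∀ V ∈ 𝒱, IsOpen V) ∧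
      A.1 ⊆ U ∧ (∀ V ∈ 𝒱, (A.1 ∩ V).Nonempty) ∧
      ∀ B : VietorisHyper X S, B.1 ⊆ U → (∀ V ∈ 𝒱, (B.1 ∩ V).Nonempty) → B ∈ O := by
  obtain ⟨O', hO', hpre⟩ :=
    (isOpen_induced_iff (t := vietorisTopology X)).1 hO
  have hgen : TopologicalSpace.GenerateOpen (vSub X) O' := hO'
  have hAO' : A.1 ∈ O' := by rw [← hpre] at hA; exact hA
  obtain ⟨f, hf, hfg, hAf, hfO⟩ := generateOpen_exists_finite_sInter hgen A.1 hAO'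
  classical
  set Uset : Set (Set X) := {W | IsOpen W ∧ {H : Set X | H ⊆ W} ∈ f} with hUset
  set 𝒱 : Set (Set X) := {W | IsOpen W ∧ {H : Set X | (H ∩ W).Nonempty} ∈ f} with h𝒱
  have hUsetFin : Uset.Finite := by
    have : Uset ⊆ (fun W : Set X => {H : Set X | H ⊆ W}) ⁻¹' f := fun W hW => hW.2
    refine Finite.of_finite_image (f := fun W : Set X => {H : Set X | H ⊆ W}) ?_ ?_
    · exact hf.subset (image_subset_iff.2 this)
    · exact fun a _ b _ h => setOf_subset_inj h
  have h𝒱Fin : 𝒱.Finite := by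
    have : 𝒱 ⊆ (fun W : Set X => {H : Set X | (H ∩ W).Nonempty}) ⁻¹' f := fun W hW => hW.2
    refine Finite.of_finite_image (f := fun W : Set X => {H : Set X | (H ∩ W).Nonempty}) ?_ ?_
    · exact hf.subset (image_subset_iff.2 this)
    · exact fun a _ b _ h => setOf_meets_inj h
  refine ⟨⋂₀ Uset, 𝒱, hUsetFin.isOpen_sInter (fun W hW => hW.1), h𝒱Fin,
    fun V hV => hV.1, ?_, ?_, ?_⟩
  · exact subset_sInter fun W hW => hAf _ hW.2
  · exact fun V hV => hAf _ hV.2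
  · intro B hBU hBV
    refine hpre ▸ (show B.1 ∈ O' from hfO ?_)
    intro s hs
    rcases hfg hs with ⟨W, hWo, rfl⟩ | ⟨W, hWo, rfl⟩
    · exact hBU.trans (sInter_subset_of_mem ⟨hWo, hs⟩)
    · exact hBV W ⟨hWo, hs⟩

end LemmaA
section Separation

variable {X : Type u} [TopologicalSpace X]

lemma hyper_sep [T2Space X] {A B : VietorisHyper X (Kcal X)} {x : X}
    (hxA : x ∈ A.1) (hxB : x ∉ B.1) :
    ∃ u v : Set (VietorisHyper X (Kcal X)),
      IsOpen u ∧ IsOpen v ∧ A ∈ u ∧ B ∈ v ∧ Disjoint u v := by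
  have hBc : IsCompact B.1 := B.2.2
  have hsep : SeparatedNhds ({x} : Set X) B.1 :=
    SeparatedNhds.of_isCompact_isCompact_isClosed isCompact_singleton hBc hBc.isClosed
      (by simpa [disjoint_singleton_left] using hxB)
  obtain ⟨U, V, hUo, hVo, hxU, hBV, hUV⟩ := hsep
  refine ⟨{C | (C.1 ∩ U).Nonempty}, {C | C.1 ⊆ V}, isOpen_hyperM hUo, isOpen_hyperP hVo,
    ⟨x, hxA, hxU (rfl : x ∈ ({x} : Set X))⟩, hBV, ?_⟩
  rw [disjoint_left]
  rintro C ⟨c, hc1, hc2⟩ hCV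
  exact (hUV.le_bot ⟨hc2, hCV hc1⟩)

theorem hyper_t2 [T2Space X] : T2Space (VietorisHyper X (Kcal X)) := by
  constructor
  intro A B hne
  have hcar : A.1 ≠ B.1 := fun h => hne (Subtype.ext h)
  rcases (not_and_or.1 (fun h : A.1 ⊆ B.1 ∧ B.1 ⊆ A.1 =>
      hcar (subset_antisymm h.1 h.2))) with h | h
  · obtain ⟨x, hxA, hxB⟩ := not_subset.1 h
    exact hyper_sep hxA hxB
  · obtain ⟨x, hxB, hxA⟩ := not_subset.1 h
    obtain ⟨v, u, hv, hu, hBv, hAu, hdisj⟩ := hyper_sep hxB hxA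
    exact ⟨u, v, hu, hv, hAu, hBv, hdisj.symm⟩

theorem hyper_regular [RegularSpace X] : RegularSpace (VietorisHyper X (Kcal X)) := by
  apply RegularSpace.of_exists_mem_nhds_isClosed_subset
  intro A s hs
  obtain ⟨O, hOs, hOopen, hAO⟩ := mem_nhds_iff.1 hs
  obtain ⟨U, 𝒱, hUo, h𝒱fin, h𝒱o, hAU, hA𝒱, hkey⟩ := vietoris_mem_nhds hOopen hAO
  classical
  -- shrink U around the compact set A
  obtain ⟨W₀, hW₀o, hAW₀, hW₀cl⟩ :=
    (A.2.2 : IsCompact A.1).exists_isOpen_closure_subset (hUo.mem_nhdsSet.2 hAU)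
  -- for each V ∈ 𝒱 pick a point of A ∩ V and shrink
  have hpick : ∀ V ∈ 𝒱, ∃ W : Set X, IsOpen W ∧ (A.1 ∩ W).Nonempty ∧
      closure W ⊆ U ∩ V := by
    intro V hV
    obtain ⟨x, hxA, hxV⟩ := hA𝒱 V hV
    have hxUV : U ∩ V ∈ nhds x := ((hUo.inter (h𝒱o V hV)).mem_nhds ⟨hAU hxA, hxV⟩)
    obtain ⟨t, htx, htcl, htsub⟩ := exists_mem_nhds_isClosed_subset hxUV
    refine ⟨interior t, isOpen_interior, ⟨x, hxA, mem_interior_iff_mem_nhds.2 htx⟩, ?_⟩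
    exact (closure_minimal interior_subset htcl).trans htsub
  choose! W hWo hWA hWcl using hpick
  set N : Set (VietorisHyper X (Kcal X)) :=
    {B | B.1 ⊆ W₀ ∪ ⋃ V ∈ 𝒱, W V} ∩ ⋂ V ∈ 𝒱, {B | (B.1 ∩ W V).Nonempty} with hN
  set t : Set (VietorisHyper X (Kcal X)) :=
    {B | B.1 ⊆ closure W₀ ∪ ⋃ V ∈ 𝒱, closure (W V)} ∩
      ⋂ V ∈ 𝒱, {B | (B.1 ∩ closure (W V)).Nonempty} with ht
  have hNopen : IsOpen N := by
    refine IsOpen.inter (isOpen_hyperP (hW₀o.union (isOpen_biUnion fun V hV => hWo V hV))) ?_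
    exact h𝒱fin.isOpen_biInter fun V hV => isOpen_hyperM (hWo V hV)
  have hAN : A ∈ N := by
    constructor
    · exact fun x hx => Or.inl (hAW₀ hx)
    · exact mem_biInter fun V hV => hWA V hV
  have hNt : N ⊆ t := by
    rintro B ⟨hB1, hB2⟩
    constructor
    · intro x hx
      rcases hB1 hx with h | h
      · exact Or.inl (subset_closure h)
      · obtain ⟨V, hV, hxV⟩ := by simpa using h
        exact Or.inr (mem_biUnion hV (subset_closure hxV))
    · refine mem_biInter fun V hV => ?_
      obtain ⟨x, hx1, hx2⟩ := (by exact mem_iInter₂.1 hB2 V hV : (B.1 ∩ W V).Nonempty)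
      exact ⟨x, hx1, subset_closure hx2⟩
  have htclosed : IsClosed t := by
    refine IsClosed.inter ?_ ?_
    · rw [← isOpen_compl_iff]
      have : {B : VietorisHyper X (Kcal X) |
          B.1 ⊆ closure W₀ ∪ ⋃ V ∈ 𝒱, closure (W V)}ᶜ =
          {B | (B.1 ∩ (closure W₀ ∪ ⋃ V ∈ 𝒱, closure (W V))ᶜ).Nonempty} := by
        ext B
        simp only [mem_compl_iff, mem_setOf_eq, not_subset]
        constructor
        · rintro ⟨x, hx1, hx2⟩; exact ⟨x, hx1, hx2⟩
        · rintro ⟨x, hx1, hx2⟩; exact ⟨x, hx1, hx2⟩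
      rw [this]
      refine isOpen_hyperM ?_
      rw [isOpen_compl_iff]
      exact (isClosed_closure).union (h𝒱fin.isClosed_biUnion fun V _ => isClosed_closure)
    · rw [← isOpen_compl_iff, compl_iInter₂]
      refine isOpen_biUnion fun V hV => ?_
      have : {B : VietorisHyper X (Kcal X) | (B.1 ∩ closure (W V)).Nonempty}ᶜ =
          {B | B.1 ⊆ (closure (W V))ᶜ} := by
        ext B
        simp only [mem_compl_iff, mem_setOf_eq, not_nonempty_iff_eq_empty,
          ← disjoint_iff_inter_eq_empty, disjoint_right, subset_def, mem_compl_iff]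
        tauto
      rw [this]
      exact isOpen_hyperP isClosed_closure.isOpen_compl
  have htO : t ⊆ O := by
    rintro B ⟨hB1, hB2⟩
    refine hkey B ?_ ?_
    · intro x hx
      rcases hB1 hx with h | h
      · exact hW₀cl h
      · obtain ⟨V, hV, hxV⟩ := by simpa using h
        exact (hWcl V hV hxV).1
    · intro V hV
      obtain ⟨x, hx1, hx2⟩ := (mem_iInter₂.1 hB2 V hV : (B.1 ∩ closure (W V)).Nonempty)
      exact ⟨x, hx1, (hWcl V hV hx2).2⟩
  exact ⟨t, mem_nhds_iff.2 ⟨N, hNt, hNopen, hAN⟩, htclosed, htO.trans hOs⟩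

end Separation
section Sneider

/-- Šneider's theorem: a compact Hausdorff space with a `G_δ` diagonal is metrizable. -/
theorem sneider_metrizable {Y : Type v} [TopologicalSpace Y] [CompactSpace Y] [T2Space Y]
    (G : ℕ → Set (Y × Y)) (hG : ∀ n, IsOpen (G n))
    (hdiag : (⋂ n, G n) = {p : Y × Y | p.1 = p.2}) :
    TopologicalSpace.MetrizableSpace Y := by
  classical
  -- squares inside each G n
  have hsq : ∀ (n : ℕ) (y : Y), ∃ V : Set Y, IsOpen V ∧ y ∈ V ∧ V ×ˢ V ⊆ G n := by
    intro n y
    have hyy : (y, y) ∈ G n := by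
      have : (y, y) ∈ ⋂ n, G n := by rw [hdiag]; exact rfl
      exact mem_iInter.1 this n
    obtain ⟨u, v, hu, hv, hyu, hyv, huv⟩ := isOpen_prod_iff.1 (hG n) y y hyy
    exact ⟨u ∩ v, hu.inter hv, ⟨hyu, hyv⟩,
      fun p hp => huv ⟨hp.1.1, hp.2.2⟩⟩
  choose V hVo hVmem hVsub using hsq
  -- finite subcovers
  have hcov : ∀ n : ℕ, ∃ t : Finset Y, (univ : Set Y) ⊆ ⋃ y ∈ t, V n y :=
    fun n => isCompact_univ.elim_finite_subcover (V n) (hVo n)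
      (fun x _ => mem_iUnion.2 ⟨x, hVmem n x⟩)
  choose T hT using hcov
  -- partitions of unity
  have hpart : ∀ n : ℕ, ∃ f : PartitionOfUnity {y // y ∈ T n} Y univ,
      f.IsSubordinate (fun i => V n i.1) := by
    intro n
    refine PartitionOfUnity.exists_isSubordinate isClosed_univ _ (fun i => hVo n i.1) ?_
    intro x _
    obtain ⟨y, hy⟩ := mem_iUnion₂.1 (hT n (mem_univ x))
    exact mem_iUnion.2 ⟨⟨y, hy.1⟩, hy.2⟩
  choose p hp using hpart
  -- the embedding
  set Φ : Y → Π n : ℕ, ({y // y ∈ T n} → ℝ) := fun x n i => p n i x with hΦ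
  have hcont : Continuous Φ :=
    continuous_pi fun n => continuous_pi fun i => (p n i).continuous
  have hinj : Function.Injective Φ := by
    intro x y hxy
    by_contra hne
    have hnotin : (x, y) ∉ ⋂ n, G n := by
      rw [hdiag]; exact hne
    have hexn : ∃ n, (x, y) ∉ G n := by
      by_contra hall
      push_neg at hall
      exact hnotin (mem_iInter.2 hall)
    obtain ⟨n, hn⟩ := hexn
    have hsum := (p n).sum_eq_one (mem_univ x)
    have hex : ∃ i, p n i x ≠ 0 := by
      by_contra hz
      push_neg at hz
      rw [finsum_eq_zero_of_forall_eq_zero (fun i => by simp [hz i])] at hsum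
      norm_num at hsum
    obtain ⟨i, hi⟩ := hex
    have hxV : x ∈ V n i.1 :=
      hp n i (subset_closure (by exact hi : x ∈ Function.support (p n i)))
    have hiy : p n i y ≠ 0 := by
      have heq : p n i x = p n i y := congrFun (congrFun hxy n) i
      rw [← heq]; exact hi
    have hyV : y ∈ V n i.1 :=
      hp n i (subset_closure (by exact hiy : y ∈ Function.support (p n i)))
    exact hn (hVsub n i.1 ⟨hxV, hyV⟩)
  have hemb : Topology.IsEmbedding Φ := (hcont.isClosedEmbedding hinj).toIsEmbedding
  exact hemb.metrizableSpace

end Sneider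
section MoreHelpers

variable {X : Type u} [TopologicalSpace X]

/-- The union of a Vietoris-compact family of compact sets is compact. -/
lemma union_of_compact_family {𝒜 : Set (VietorisHyper X (Kcal X))} (h𝒜 : IsCompact 𝒜) :
    IsCompact (⋃ A ∈ 𝒜, (A : VietorisHyper X (Kcal X)).1) := by
  classical
  apply isCompact_of_finite_subcover
  intro ι U hUo hcov
  set G : Finset ι → Set (VietorisHyper X (Kcal X)) :=
    fun t => {B | B.1 ⊆ ⋃ i ∈ t, U i} with hG
  have hGo : ∀ t, IsOpen (G t) := fun t => isOpen_hyperP (isOpen_biUnion fun i _ => hUo i)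
  have hGcov : 𝒜 ⊆ ⋃ t, G t := by
    intro A hA
    have hsub : A.1 ⊆ ⋃ i, U i := (subset_biUnion_of_mem hA).trans hcov
    obtain ⟨t, ht⟩ := (A.2.2 : IsCompact A.1).elim_finite_subcover U hUo hsub
    exact mem_iUnion.2 ⟨t, ht⟩
  obtain ⟨T, hT⟩ := h𝒜.elim_finite_subcover G hGo hGcov
  refine ⟨T.biUnion id, ?_⟩
  intro x hx
  obtain ⟨A, hA, hxA⟩ := by simpa using hx
  obtain ⟨t, ht, hAt⟩ := by simpa using hT hA
  have : x ∈ ⋃ i ∈ t, U i := hAt hxA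
  obtain ⟨i, hi, hxi⟩ := by simpa using this
  simp only [mem_iUnion, Finset.mem_biUnion, id]
  exact ⟨i, ⟨t, ht, hi⟩, hxi⟩

/-- Every `G_δ` set is a countable intersection of a sequence of open sets. -/
lemma isGδ_iff_seq {α : Type*} [TopologicalSpace α] {s : Set α} (h : IsGδ s) :
    ∃ U : ℕ → Set α, (∀ n, IsOpen (U n)) ∧ s = ⋂ n, U n := by
  obtain ⟨T, hTo, hTc, rfl⟩ := h
  rcases T.eq_empty_or_nonempty with rfl | hne
  · exact ⟨fun _ => univ, fun _ => isOpen_univ, by simp⟩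
  · obtain ⟨f, rfl⟩ := hTc.exists_eq_range hne
    exact ⟨f, fun n => hTo _ (mem_range_self n), (sInter_range f)⟩

/-- A compact metrizable space is second countable. -/
lemma secondCountable_of_compact_metrizable (Y : Type v) [TopologicalSpace Y] [CompactSpace Y]
    [TopologicalSpace.MetrizableSpace Y] : SecondCountableTopology Y := by
  letI : MetricSpace Y := TopologicalSpace.metrizableSpaceMetric Y
  infer_instance

end MoreHelpers
section Forward

variable {X : Type u} [TopologicalSpace X]

lemma forward_gdelta (h : CompactGDeltaProperty (VietorisHyper X (Kcal X))) :
    CompactGDeltaProperty X := by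
  intro K hK
  rcases K.eq_empty_or_nonempty with rfl | hne
  · exact ⟨fun _ => ∅, fun _ => isOpen_empty, by rw [iInter_const]⟩
  set A : VietorisHyper X (Kcal X) := ⟨K, hne, hK⟩ with hA
  obtain ⟨W, hWo, hWeq⟩ := h {A} isCompact_singleton
  have hmem : ∀ n, A ∈ W n := fun n =>
    mem_iInter.1 (hWeq ▸ (rfl : A ∈ ({A} : Set _))) n
  have hex : ∀ n : ℕ, ∃ (U : Set X) (𝒱 : Set (Set X)), IsOpen U ∧ 𝒱.Finite ∧
      (∀ V ∈ 𝒱, IsOpen V) ∧ A.1 ⊆ U ∧ (∀ V ∈ 𝒱, (A.1 ∩ V).Nonempty) ∧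
      ∀ B : VietorisHyper X (Kcal X), B.1 ⊆ U → (∀ V ∈ 𝒱, (B.1 ∩ V).Nonempty) → B ∈ W n :=
    fun n => vietoris_mem_nhds (hWo n) (hmem n)
  choose U 𝒱 hUo _ _ hAU hA𝒱 hkey using hex
  refine ⟨U, hUo, subset_antisymm (subset_iInter fun n => hAU n) ?_⟩
  intro x hx
  set B : VietorisHyper X (Kcal X) :=
    ⟨K ∪ {x}, ⟨x, Or.inr rfl⟩, hK.union isCompact_singleton⟩ with hB
  have hBW : ∀ n, B ∈ W n := by
    intro n
    refine hkey n B (union_subset (hAU n) ?_) (fun V hV => (hA𝒱 n V hV).mono ?_)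
    · exact singleton_subset_iff.2 (mem_iInter.1 hx n)
    · exact inter_subset_inter_left _ subset_union_left
  have hBA : B ∈ ({A} : Set (VietorisHyper X (Kcal X))) := hWeq ▸ mem_iInter.2 hBW
  have hKx : K ∪ {x} = K := congrArg Subtype.val (mem_singleton_iff.1 hBA)
  exact hKx ▸ (Or.inr rfl : x ∈ K ∪ {x})

lemma forward_metrizable [T1Space X] [RegularSpace X]
    (h : CompactGDeltaProperty (VietorisHyper X (Kcal X))) :
    ∀ K : Set X, IsCompact K → TopologicalSpace.MetrizableSpace K := by
  haveI : T3Space X := { toT0Space := inferInstance, toRegularSpace := inferInstance }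
  intro K hK
  haveI : CompactSpace K := isCompact_iff_compactSpace.mp hK
  -- the singleton map
  set σ : K → VietorisHyper X (Kcal X) :=
    fun x => ⟨{(x : X)}, singleton_nonempty _, isCompact_singleton⟩ with hσ
  have hσc : Continuous σ := by
    refine continuous_induced_rng.2 ?_
    refine (continuous_generateFrom_iff.mpr ?_ :
      Continuous[_, TopologicalSpace.generateFrom (vSub X)] (Subtype.val ∘ σ))
    rintro s (⟨U, hU, rfl⟩ | ⟨U, hU, rfl⟩)
    · have heq : (Subtype.val ∘ σ) ⁻¹' {H : Set X | H ⊆ U} = ((↑) : K → X) ⁻¹' U := by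
        ext x; simp [hσ]
      rw [heq]; exact hU.preimage continuous_subtype_val
    · have heq : (Subtype.val ∘ σ) ⁻¹' {H : Set X | (H ∩ U).Nonempty} =
          ((↑) : K → X) ⁻¹' U := by
        ext x; simp [hσ, singleton_inter_nonempty]
      rw [heq]; exact hU.preimage continuous_subtype_val
  -- the pair map
  set g : K × K → VietorisHyper X (Kcal X) :=
    fun q => ⟨{(q.1 : X), (q.2 : X)}, insert_nonempty _ _,
      ((finite_singleton _).insert _).isCompact⟩ with hg
  have hgc : Continuous g := by
    refine continuous_induced_rng.2 ?_
    refine (continuous_generateFrom_iff.mpr ?_ :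
      Continuous[_, TopologicalSpace.generateFrom (vSub X)] (Subtype.val ∘ g))
    rintro s (⟨U, hU, rfl⟩ | ⟨U, hU, rfl⟩)
    · have heq : (Subtype.val ∘ g) ⁻¹' {H : Set X | H ⊆ U} =
          (fun q : K × K => (q.1 : X)) ⁻¹' U ∩ (fun q : K × K => (q.2 : X)) ⁻¹' U := by
        ext q; simp [hg, insert_subset_iff]
      rw [heq]
      exact (hU.preimage (continuous_subtype_val.comp continuous_fst)).inter
        (hU.preimage (continuous_subtype_val.comp continuous_snd))
    · have heq : (Subtype.val ∘ g) ⁻¹' {H : Set X | (H ∩ U).Nonempty} =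
          (fun q : K × K => (q.1 : X)) ⁻¹' U ∪ (fun q : K × K => (q.2 : X)) ⁻¹' U := by
        ext q
        simp only [mem_preimage, Function.comp_apply, hg, mem_setOf_eq, mem_union]
        constructor
        · rintro ⟨y, hy, hyU⟩
          rcases hy with rfl | rfl
          · exact Or.inl hyU
          · exact Or.inr hyU
        · rintro (h1 | h1)
          · exact ⟨_, Or.inl rfl, h1⟩
          · exact ⟨_, Or.inr rfl, h1⟩
      rw [heq]
      exact (hU.preimage (continuous_subtype_val.comp continuous_fst)).union
        (hU.preimage (continuous_subtype_val.comp continuous_snd))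
  -- the set of singletons is compact, hence Gδ
  obtain ⟨W, hWo, hWeq⟩ := h (σ '' univ) (isCompact_univ.image hσc)
  have hdiag : (⋂ n, g ⁻¹' (W n)) = {p : K × K | p.1 = p.2} := by
    have h1 : g ⁻¹' (σ '' univ) = {p : K × K | p.1 = p.2} := by
      ext ⟨x, y⟩
      simp only [mem_preimage, image_univ, mem_range, mem_setOf_eq]
      constructor
      · rintro ⟨z, hz⟩
        have hzc : ({(z : X)} : Set X) = {(x : X), (y : X)} := congrArg Subtype.val hz
        have hxm : (x : X) ∈ ({(z : X)} : Set X) := by rw [hzc]; exact mem_insert _ _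
        have hym : (y : X) ∈ ({(z : X)} : Set X) := by rw [hzc]; exact mem_insert_of_mem _ rfl
        have hx : (x : X) = (z : X) := mem_singleton_iff.1 hxm
        have hy : (y : X) = (z : X) := mem_singleton_iff.1 hym
        exact Subtype.ext (hx.trans hy.symm)
      · rintro rfl
        exact ⟨x, Subtype.ext (by simp [hσ, hg])⟩
    rw [← h1, hWeq, preimage_iInter]
  exact sneider_metrizable (fun n => g ⁻¹' (W n)) (fun n => (hWo n).preimage hgc) hdiag

end Forward
section SecondCountable

variable {X : Type u} [TopologicalSpace X]

/-- The collection of nonempty compact subsets of `K`, inside the Vietoris hyperspace. -/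
def KHyper (X : Type u) [TopologicalSpace X] (K : Set X) :
    Set (VietorisHyper X (Kcal X)) :=
  {B | B.1 ⊆ K}

/-- If `K` has a second countable subspace topology, then the collection of
nonempty compact subsets of `K`, as a subspace of the Vietoris hyperspace, is second
countable. -/
lemma hyper_secondCountable {K : Set X} [SecondCountableTopology K] :
    SecondCountableTopology (KHyper X K) := by
  classical
  -- a countable family of open sets of `X` whose traces form a basis of `K`
  obtain ⟨b, hbc, -, hbasis⟩ := exists_countable_basis K
  have hWex : ∀ s ∈ b, ∃ W : Set X, IsOpen W ∧ ((↑) : K → X) ⁻¹' W = s := by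
    intro s hs
    exact isOpen_induced_iff.1 (hbasis.isOpen hs)
  choose! Wb hWbo hWbeq using hWex
  set D : Set (Set X) := Wb '' b with hD
  have hDc : D.Countable := hbc.image _
  have hDo : ∀ W ∈ D, IsOpen W := by rintro W ⟨s, hs, rfl⟩; exact hWbo s hs
  have hDbasis : ∀ x ∈ K, ∀ U : Set X, IsOpen U → x ∈ U →
      ∃ W ∈ D, x ∈ W ∧ W ∩ K ⊆ U := by
    intro x hx U hU hxU
    have hmem : (⟨x, hx⟩ : K) ∈ ((↑) : K → X) ⁻¹' U := hxU
    obtain ⟨s, hsb, hxs, hsU⟩ := hbasis.exists_subset_of_mem_open hmem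
      ((hU.preimage continuous_subtype_val))
    refine ⟨Wb s, mem_image_of_mem _ hsb, ?_, ?_⟩
    · have : (⟨x, hx⟩ : K) ∈ ((↑) : K → X) ⁻¹' (Wb s) := by rw [hWbeq s hsb]; exact hxs
      exact this
    · intro y hy
      have : (⟨y, hy.2⟩ : K) ∈ ((↑) : K → X) ⁻¹' (Wb s) := hy.1
      rw [hWbeq s hsb] at this
      exact hsU this
  -- the countable subbasis of the hyperspace of `K`
  set 𝒞 : Set (Set (KHyper X K)) :=
    ((fun t : Set (Set X) => {B : KHyper X K | (B : VietorisHyper X (Kcal X)).1 ⊆ ⋃₀ t}) ''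
        {t | t.Finite ∧ t ⊆ D}) ∪
      ((fun W : Set X =>
        {B : KHyper X K | ((B : VietorisHyper X (Kcal X)).1 ∩ W).Nonempty}) '' D)
    with h𝒞
  have h𝒞c : 𝒞.Countable :=
    ((countable_setOf_finite_subset hDc).image _).union (hDc.image _)
  have hBK : ∀ B : KHyper X K, (B : VietorisHyper X (Kcal X)).1 ⊆ K := fun B => B.2
  -- each member of 𝒞 is open
  have h𝒞o : ∀ s ∈ 𝒞, IsOpen s := by
    rintro s (⟨t, ⟨htf, htD⟩, rfl⟩ | ⟨W, hW, rfl⟩)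
    · exact (isOpen_hyperP (isOpen_sUnion fun W hW => hDo W (htD hW))).preimage
        continuous_subtype_val
    · exact (isOpen_hyperM (hDo W hW)).preimage continuous_subtype_val
  -- 𝒞 generates the topology
  have htop : (instTopologicalSpaceSubtype : TopologicalSpace (KHyper X K)) =
      TopologicalSpace.generateFrom 𝒞 := by
    refine le_antisymm (le_generateFrom h𝒞o) ?_
    set c : KHyper X K → Set X :=
      (Subtype.val : VietorisHyper X (Kcal X) → Set X) ∘ Subtype.val with hc
    have h0 : (instTopologicalSpaceSubtype : TopologicalSpace (KHyper X K)) =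
        TopologicalSpace.induced c (vietorisTopology X) :=
      induced_compose
        (f := (Subtype.val : KHyper X K → VietorisHyper X (Kcal X)))
        (g := (Subtype.val : VietorisHyper X (Kcal X) → Set X))
        (tγ := vietorisTopology X)
    have h1 : (instTopologicalSpaceSubtype : TopologicalSpace (KHyper X K)) =
        TopologicalSpace.generateFrom ((Set.preimage c) '' vSub X) := by
      rw [h0, vietorisTopology_eq, induced_generateFrom_eq]
    rw [h1]
    refine le_generateFrom ?_
    rintro s ⟨s', hs', rfl⟩
    show TopologicalSpace.GenerateOpen 𝒞 (c ⁻¹' s')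
    rcases hs' with ⟨U, hU, rfl⟩ | ⟨U, hU, rfl⟩
    · -- containment part
      have heq : c ⁻¹' {H : Set X | H ⊆ U} =
          ⋃ t ∈ {t : Set (Set X) | t.Finite ∧ t ⊆ D ∧ ∀ W ∈ t, W ∩ K ⊆ U},
            {B : KHyper X K | (B : VietorisHyper X (Kcal X)).1 ⊆ ⋃₀ t} := by
        ext B
        simp only [hc, mem_preimage, Function.comp_apply, mem_setOf_eq, mem_iUnion, exists_prop]
        constructor
        · intro hBU
          have hcpt : IsCompact (B : VietorisHyper X (Kcal X)).1 := B.1.2.2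
          have hWex2 : ∀ x ∈ (B : VietorisHyper X (Kcal X)).1,
              ∃ W ∈ D, x ∈ W ∧ W ∩ K ⊆ U :=
            fun x hx => hDbasis x (hBK B hx) U hU (hBU hx)
          choose! w hwD hwmem hwU using hWex2
          obtain ⟨fs, hfs⟩ := hcpt.elim_finite_subcover
            (fun i : (B : VietorisHyper X (Kcal X)).1 => w i.1)
            (fun i => hDo _ (hwD i.1 i.2))
            (fun x hx => mem_iUnion.2 ⟨⟨x, hx⟩, hwmem x hx⟩)
          refine ⟨(fun i : (B : VietorisHyper X (Kcal X)).1 => w i.1) '' ↑fs,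
            ⟨fs.finite_toSet.image _, ?_, ?_⟩, ?_⟩
          · rintro W ⟨i, hi, rfl⟩; exact hwD i.1 i.2
          · rintro W ⟨i, hi, rfl⟩; exact hwU i.1 i.2
          · intro x hx
            obtain ⟨i, hi, hxi⟩ := mem_iUnion₂.1 (hfs hx)
            exact ⟨w i.1, mem_image_of_mem _ hi, hxi⟩
        · rintro ⟨t, ⟨htf, htD, htU⟩, hBt⟩
          intro x hx
          obtain ⟨W, hWt, hxW⟩ := hBt hx
          exact htU W hWt ⟨hxW, hBK B hx⟩
      rw [heq, ← sUnion_image]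
      refine TopologicalSpace.GenerateOpen.sUnion _ ?_
      rintro s ⟨t, ht, rfl⟩
      exact TopologicalSpace.GenerateOpen.basic _
        (Or.inl ⟨t, ⟨ht.1, ht.2.1⟩, rfl⟩)
    · -- hitting part
      have heq : c ⁻¹' {H : Set X | (H ∩ U).Nonempty} =
          ⋃ W ∈ {W : Set X | W ∈ D ∧ W ∩ K ⊆ U},
            {B : KHyper X K | ((B : VietorisHyper X (Kcal X)).1 ∩ W).Nonempty} := by
        ext B
        simp only [hc, mem_preimage, Function.comp_apply, mem_setOf_eq, mem_iUnion, exists_prop]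
        constructor
        · rintro ⟨x, hxB, hxU⟩
          obtain ⟨W, hWD, hxW, hWU⟩ := hDbasis x (hBK B hxB) U hU hxU
          exact ⟨W, ⟨hWD, hWU⟩, x, hxB, hxW⟩
        · rintro ⟨W, ⟨hWD, hWU⟩, x, hxB, hxW⟩
          exact ⟨x, hxB, hWU ⟨hxW, hBK B hxB⟩⟩
      rw [heq, ← sUnion_image]
      refine TopologicalSpace.GenerateOpen.sUnion _ ?_
      rintro s ⟨W, hW, rfl⟩
      exact TopologicalSpace.GenerateOpen.basic _ (Or.inr ⟨W, hW.1, rfl⟩)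
  exact (TopologicalSpace.isTopologicalBasis_of_subbasis htop).secondCountableTopology
    ((countable_setOf_finite_subset h𝒞c).image _)

end SecondCountable
section Backward

variable {X : Type u} [TopologicalSpace X]

lemma backward_direction [T1Space X] [RegularSpace X] (h1 : CompactGDeltaProperty X)
    (h2 : ∀ K : Set X, IsCompact K → TopologicalSpace.MetrizableSpace K) :
    CompactGDeltaProperty (VietorisHyper X (Kcal X)) := by
  haveI : T3Space X := { toT0Space := inferInstance, toRegularSpace := inferInstance }
  intro 𝒜 h𝒜
  set K : Set X := ⋃ A ∈ 𝒜, (A : VietorisHyper X (Kcal X)).1 with hKdef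
  have hK : IsCompact K := union_of_compact_family h𝒜
  obtain ⟨U, hUo, hKeq⟩ := h1 K hK
  haveI : TopologicalSpace.MetrizableSpace K := h2 K hK
  haveI : CompactSpace K := isCompact_iff_compactSpace.mp hK
  haveI : SecondCountableTopology K := secondCountable_of_compact_metrizable K
  haveI : SecondCountableTopology (KHyper X K) := hyper_secondCountable
  haveI : RegularSpace (VietorisHyper X (Kcal X)) := hyper_regular
  haveI : T2Space (VietorisHyper X (Kcal X)) := hyper_t2
  haveI : T3Space (VietorisHyper X (Kcal X)) :=
    { toT0Space := inferInstance, toRegularSpace := inferInstance }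
  haveI : TopologicalSpace.MetrizableSpace (KHyper X K) := inferInstance
  set 𝒜' : Set (KHyper X K) := Subtype.val ⁻¹' 𝒜 with h𝒜'def
  have h𝒜S : 𝒜 ⊆ KHyper X K := fun A hA => subset_biUnion_of_mem hA
  have h𝒜'c : IsCompact 𝒜' := by
    refine (Topology.IsInducing.isCompact_preimage_iff Topology.IsInducing.subtypeVal ?_).2 h𝒜
    rw [Subtype.range_val]
    exact h𝒜S
  have h𝒜'closed : IsClosed 𝒜' := h𝒜'c.isClosed
  have hGδ : IsGδ 𝒜' := by
    letI : MetricSpace (KHyper X K) :=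
      TopologicalSpace.metrizableSpaceMetric (KHyper X K)
    exact h𝒜'closed.isGδ
  obtain ⟨O', hO'o, h𝒜'eq⟩ := isGδ_iff_seq hGδ
  have hOex : ∀ n, ∃ O : Set (VietorisHyper X (Kcal X)),
      IsOpen O ∧ Subtype.val ⁻¹' O = O' n :=
    fun n => isOpen_induced_iff.1 (hO'o n)
  choose O hOo hOeq using hOex
  refine ⟨fun n => O n ∩ {B | B.1 ⊆ U n},
    fun n => (hOo n).inter (isOpen_hyperP (hUo n)), ?_⟩
  ext B
  simp only [mem_iInter, mem_inter_iff, mem_setOf_eq]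
  constructor
  · intro hB
    have hBK : B.1 ⊆ K := h𝒜S hB
    have hBm : (⟨B, hBK⟩ : KHyper X K) ∈ 𝒜' := hB
    rw [h𝒜'eq] at hBm
    intro n
    refine ⟨?_, fun x hx => (hKeq ▸ hBK) hx |> mem_iInter.1 |> (· n)⟩
    have := mem_iInter.1 hBm n
    rw [← hOeq n] at this
    exact this
  · intro hB
    have hBK : B.1 ⊆ K := by
      rw [hKeq]
      exact subset_iInter fun n => (hB n).2
    have hBm : (⟨B, hBK⟩ : KHyper X K) ∈ ⋂ n, O' n := by
      refine mem_iInter.2 fun n => ?_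
      rw [← hOeq n]
      exact (hB n).1
    rw [← h𝒜'eq] at hBm
    exact hBm

end Backward
/-- `(𝒦(X), τ_V)` has the compact-`G_δ` property iff `X` has the
compact-`G_δ` property and every compact subset of `X` is metrizable. -/
theorem statement14 (X : Type u) [TopologicalSpace X] [T1Space X] [RegularSpace X] :
    CompactGDeltaProperty (VietorisHyper X (Kcal X)) ↔
      CompactGDeltaProperty X ∧
        ∀ K : Set X, IsCompact K → TopologicalSpace.MetrizableSpace K := by
  constructor
  · intro h
    exact ⟨forward_gdelta h, forward_metrizable h⟩
  · rintro ⟨h1, h2⟩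
    exact backward_direction h1 h2
end

section
/- Let X be a T1 regular space. If the hyperspace CL(X) with the Fell topology is Hausdorff and has countable pseudocharacter, then CL(X) with the Fell topology is first-countable. -/
open Set TopologicalSpace Filter
open scoped Topology

universe u v

section Aux

variable {X : Type u} [TopologicalSpace X]

/-- The candidate limit of an ultrafilter in the Fell topology. -/
def fellLim (f : Ultrafilter (Set X)) : Set X :=
  {x : X | ∀ U : Set X, IsOpen U → x ∈ U → {H : Set X | (H ∩ U).Nonempty} ∈ f}

lemma fellLim_isClosed (f : Ultrafilter (Set X)) : IsClosed (fellLim f) := by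
  rw [← isOpen_compl_iff, isOpen_iff_forall_mem_open]
  intro x hx
  simp only [fellLim, mem_compl_iff, mem_setOf_eq, not_forall] at hx
  obtain ⟨U, hUo, hxU, hUf⟩ := hx
  refine ⟨U, fun y hy hyL => hUf (hyL U hUo hy), hUo, hxU⟩

lemma fellLim_avoid (f : Ultrafilter (Set X)) {K : Set X} (hK : IsCompact K)
    (h : Disjoint (fellLim f) K) : {H : Set X | H ∩ K = ∅} ∈ f := by
  have hx : ∀ x ∈ K, ∃ U : Set X, IsOpen U ∧ x ∈ U ∧ {H : Set X | (H ∩ U).Nonempty} ∉ f := by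
    intro x hxK
    have : x ∉ fellLim f := fun hm => (disjoint_left.1 h) hm hxK
    simp only [fellLim, mem_setOf_eq, not_forall] at this
    obtain ⟨U, h1, h2, h3⟩ := this
    exact ⟨U, h1, h2, h3⟩
  choose! U hUo hxU hUf using hx
  obtain ⟨t, htK, htcov⟩ := hK.elim_nhds_subcover U (fun x hxK => (hUo x hxK).mem_nhds (hxU x hxK))
  have hmem : ∀ x ∈ t, {H : Set X | H ∩ U x = ∅} ∈ f := by
    intro x hxt
    have h1 : {H : Set X | (H ∩ U x).Nonempty}ᶜ ∈ f :=
      (Ultrafilter.compl_mem_iff_notMem).2 (hUf x (htK x hxt))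
    convert h1 using 1
    ext H
    simp [not_nonempty_iff_eq_empty]
  have hinter : (⋂ x ∈ t, {H : Set X | H ∩ U x = ∅}) ∈ f := (biInter_finset_mem t).2 hmem
  refine f.toFilter.mem_of_superset hinter ?_
  intro H hH
  simp only [mem_iInter, mem_setOf_eq] at hH ⊢
  rw [← subset_empty_iff]
  intro y hy
  obtain ⟨x, hxt, hyU⟩ := by
    have := htcov hy.2
    simpa only [mem_iUnion, exists_prop] using this
  have : y ∈ H ∩ U x := ⟨hy.1, hyU⟩
  rw [hH x hxt] at this
  exact this

lemma fell_le_nhds (f : Ultrafilter (Set X)) :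
    ↑f ≤ @nhds (Set X) (fellTopology X) (fellLim f) := by
  rw [fellTopology, nhds_generateFrom]
  refine le_iInf₂ ?_
  rintro s ⟨hLs, hsg⟩
  rw [le_principal_iff]
  rcases hsg with ⟨U, hUo, rfl⟩ | ⟨K, hK, rfl⟩
  · obtain ⟨x, hxL, hxU⟩ := hLs
    exact hxL U hUo hxU
  · have hdisj : Disjoint (fellLim f) K := by
      rw [disjoint_iff_inter_eq_empty]
      rw [mem_setOf_eq, subset_compl_iff_disjoint_right, disjoint_iff_inter_eq_empty] at hLs
      exact hLs
    have := fellLim_avoid f hK hdisj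
    refine f.toFilter.mem_of_superset this ?_
    intro H hH
    rw [mem_setOf_eq, subset_compl_iff_disjoint_right, disjoint_iff_inter_eq_empty]
    exact hH

/-- The set of closed sets meeting a fixed compact set is Fell-compact. -/
lemma fell_isCompact_meets {C : Set X} (hC : IsCompact C) :
    @IsCompact (Set X) (fellTopology X) {H : Set X | IsClosed H ∧ (H ∩ C).Nonempty} := by
  rw [@isCompact_iff_ultrafilter_le_nhds (Set X) (fellTopology X)]
  intro f hf
  have hMf : {H : Set X | IsClosed H ∧ (H ∩ C).Nonempty} ∈ f := le_principal_iff.1 hf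
  refine ⟨fellLim f, ⟨fellLim_isClosed f, ?_⟩, fell_le_nhds f⟩
  by_contra hne
  rw [not_nonempty_iff_eq_empty, ← disjoint_iff_inter_eq_empty] at hne
  have h1 := fellLim_avoid f hC hne
  have h2 : ({H : Set X | IsClosed H ∧ (H ∩ C).Nonempty} ∩ {H : Set X | H ∩ C = ∅}) ∈ f :=
    Filter.inter_mem hMf h1
  obtain ⟨H, hH1, hH2⟩ := f.nonempty_of_mem h2
  have hne' : (H ∩ C).Nonempty := hH1.2
  rw [mem_setOf_eq] at hH2
  rw [hH2] at hne'
  exact hne'.ne_empty rfl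

/-- Basic neighborhood extraction for the Fell topology. -/
lemma fell_basic_nhd {W : Set (Set X)} (hW : @IsOpen (Set X) (fellTopology X) W) :
    ∀ {A : Set X}, A ∈ W →
    ∃ (𝒰 : Finset (Set X)) (K : Set X),
      (∀ U ∈ 𝒰, IsOpen U ∧ (A ∩ U).Nonempty) ∧ IsCompact K ∧ A ∩ K = ∅ ∧
      {H : Set X | (∀ U ∈ 𝒰, (H ∩ U).Nonempty) ∧ H ∩ K = ∅} ⊆ W := by
  classical
  have hW' : GenerateOpen
      ({S | ∃ U : Set X, IsOpen U ∧ S = {H : Set X | (H ∩ U).Nonempty}} ∪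
       {S | ∃ K : Set X, IsCompact K ∧ S = {H : Set X | H ⊆ Kᶜ}}) W := hW
  clear hW
  induction hW' with
  | basic s hs =>
    intro A hA
    rcases hs with ⟨U, hUo, rfl⟩ | ⟨K, hK, rfl⟩
    · refine ⟨{U}, ∅, ?_, isCompact_empty, inter_empty _, fun H hH => hH.1 U (Finset.mem_singleton_self U)⟩
      intro V hV
      rw [Finset.mem_singleton] at hV
      subst hV
      exact ⟨hUo, hA⟩
    · refine ⟨∅, K, by simp, hK, ?_, fun H hH => ?_⟩
      · rw [mem_setOf_eq, subset_compl_iff_disjoint_right, disjoint_iff_inter_eq_empty] at hA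
        exact hA
      · rw [mem_setOf_eq, subset_compl_iff_disjoint_right, disjoint_iff_inter_eq_empty]
        exact hH.2
  | univ =>
    intro A _
    exact ⟨∅, ∅, by simp, isCompact_empty, inter_empty _, fun H _ => trivial⟩
  | inter s t _ _ ihs iht =>
    intro A hA
    obtain ⟨𝒰₁, K₁, h1, hK1, hA1, hsub1⟩ := ihs hA.1
    obtain ⟨𝒰₂, K₂, h2, hK2, hA2, hsub2⟩ := iht hA.2
    refine ⟨𝒰₁ ∪ 𝒰₂, K₁ ∪ K₂, ?_, hK1.union hK2, ?_, ?_⟩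
    · intro U hU
      rcases Finset.mem_union.1 hU with h | h
      exacts [h1 U h, h2 U h]
    · rw [inter_union_distrib_left, hA1, hA2, union_empty]
    · intro H hH
      have hHK : H ∩ (K₁ ∪ K₂) = ∅ := hH.2
      rw [inter_union_distrib_left, union_empty_iff] at hHK
      exact ⟨hsub1 ⟨fun U hU => hH.1 U (Finset.mem_union_left _ hU), hHK.1⟩,
             hsub2 ⟨fun U hU => hH.1 U (Finset.mem_union_right _ hU), hHK.2⟩⟩
  | sUnion S _ ih =>
    intro A hA
    obtain ⟨s, hsS, hAs⟩ := hA
    obtain ⟨𝒰, K, h1, h2, h3, h4⟩ := ih s hsS hAs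
    exact ⟨𝒰, K, h1, h2, h3, fun H hH => ⟨s, hsS, h4 hH⟩⟩

end Aux

section Hyper

variable {X : Type u} [TopologicalSpace X]

lemma fellHyper_isOpen_iff {S : Set (Set X)} {V : Set (FellHyper X S)} :
    IsOpen V ↔ ∃ W : Set (Set X), @IsOpen (Set X) (fellTopology X) W ∧
      (Subtype.val : FellHyper X S → Set X) ⁻¹' W = V :=
  Iff.rfl

/-- From Hausdorffness of the Fell hyperspace, every point of `X` has a
compact neighborhood. -/
lemma exists_compact_nhds_of_fell_t2 [T1Space X]
    (h2 : T2Space (FellHyper X (CL X))) (y : X) :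
    ∃ K : Set X, IsCompact K ∧ K ∈ 𝓝 y := by
  classical
  by_cases hX : ∃ z : X, z ≠ y
  · obtain ⟨z, hz⟩ := hX
    have hACL : ({z} : Set X) ∈ CL X := ⟨singleton_nonempty z, isClosed_singleton⟩
    have hBCL : ({z, y} : Set X) ∈ CL X :=
      ⟨⟨z, by simp⟩, (Set.toFinite ({z, y} : Set X)).isClosed⟩
    set A : FellHyper X (CL X) := ⟨{z}, hACL⟩ with hAdef
    set B : FellHyper X (CL X) := ⟨{z, y}, hBCL⟩ with hBdef
    have hAB : A ≠ B := by
      intro h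
      have : ({z} : Set X) = {z, y} := congrArg Subtype.val h
      have hy : y ∈ ({z} : Set X) := this ▸ (by simp : y ∈ ({z, y} : Set X))
      exact hz (mem_singleton_iff.1 hy).symm
    haveI := h2
    obtain ⟨V₁, V₂, hV₁, hV₂, hA1, hB2, hdisj⟩ := t2_separation hAB
    obtain ⟨W₁, hW₁, rfl⟩ := fellHyper_isOpen_iff.1 hV₁
    obtain ⟨W₂, hW₂, rfl⟩ := fellHyper_isOpen_iff.1 hV₂
    obtain ⟨𝒰₁, K₁, h𝒰₁, hK₁, hAK₁, hsub₁⟩ := fell_basic_nhd hW₁ hA1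
    obtain ⟨𝒰₂, K₂, h𝒰₂, hK₂, hBK₂, hsub₂⟩ := fell_basic_nhd hW₂ hB2
    have hzK₁ : z ∉ K₁ := fun h => by
      have : z ∈ ({z} : Set X) ∩ K₁ := ⟨rfl, h⟩
      rw [hAK₁] at this; exact this
    have hzK₂ : z ∉ K₂ := fun h => by
      have : z ∈ ({z, y} : Set X) ∩ K₂ := ⟨by simp, h⟩
      rw [hBK₂] at this; exact this
    by_cases hcase : ∀ U ∈ 𝒰₂, (U \ (K₁ ∪ K₂)).Nonempty
    · exfalso
      haveI : Nonempty X := ⟨y⟩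
      choose! v hv using hcase
      set H : Set X := insert z (v '' (↑𝒰₂ : Set (Set X))) with hHdef
      have hHfin : H.Finite := ((𝒰₂.finite_toSet).image v).insert z
      have hHCL : H ∈ CL X := ⟨⟨z, mem_insert _ _⟩, hHfin.isClosed⟩
      have hHK : ∀ x ∈ H, x ∉ K₁ ∪ K₂ := by
        intro x hx
        rcases hx with rfl | hx
        · intro h
          rcases h with h | h
          exacts [hzK₁ h, hzK₂ h]
        · obtain ⟨U, hU𝒰, rfl⟩ := hx
          exact (hv U hU𝒰).2
      have hH1 : H ∈ W₁ := by
        refine hsub₁ ⟨fun U hU => ?_, ?_⟩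
        · obtain ⟨x, hx⟩ := (h𝒰₁ U hU).2
          rcases hx with ⟨hx1, hx2⟩
          rw [mem_singleton_iff] at hx1
          subst hx1
          exact ⟨x, mem_insert _ _, hx2⟩
        · rw [← subset_empty_iff]
          rintro x ⟨hx1, hx2⟩
          exact (hHK x hx1) (Or.inl hx2)
      have hH2 : H ∈ W₂ := by
        refine hsub₂ ⟨fun U hU => ?_, ?_⟩
        · exact ⟨v U, mem_insert_of_mem _ (mem_image_of_mem v hU), (hv U hU).1⟩
        · rw [← subset_empty_iff]
          rintro x ⟨hx1, hx2⟩
          exact (hHK x hx1) (Or.inr hx2)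
      exact Set.disjoint_left.1 hdisj (show (⟨H, hHCL⟩ : FellHyper X (CL X)) ∈ _ from hH1)
        (show (⟨H, hHCL⟩ : FellHyper X (CL X)) ∈ _ from hH2)
    · push_neg at hcase
      obtain ⟨U, hU𝒰, hUempty⟩ := hcase
      have hUsub : U ⊆ K₁ ∪ K₂ := by
        rw [diff_eq_empty] at hUempty
        exact hUempty
      obtain ⟨hUo, hBU⟩ := h𝒰₂ U hU𝒰
      obtain ⟨b, hbB, hbU⟩ := hBU
      rcases hbB with rfl | hbB
      · exact absurd (hUsub hbU) (by simp [hzK₁, hzK₂])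
      · rw [mem_singleton_iff] at hbB
        subst hbB
        exact ⟨K₁ ∪ K₂, hK₁.union hK₂, mem_nhds_iff.2 ⟨U, hUsub, hUo, hbU⟩⟩
  · push_neg at hX
    refine ⟨{y}, isCompact_singleton, ?_⟩
    have : (univ : Set X) = {y} := by
      ext x; simp [hX x]
    rw [← this]
    exact univ_mem

lemma fellHyper_weaklyLocallyCompact [T1Space X] [RegularSpace X]
    (h2 : T2Space (FellHyper X (CL X))) :
    WeaklyLocallyCompactSpace (FellHyper X (CL X)) := by
  classical
  haveI : T3Space X := ⟨⟩
  constructor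
  intro A
  obtain ⟨hAne, hAcl⟩ := A.2
  obtain ⟨x, hx⟩ := hAne
  obtain ⟨N, hNc, hNy⟩ := exists_compact_nhds_of_fell_t2 h2 x
  have hVx : x ∈ interior N := mem_interior_iff_mem_nhds.2 hNy
  have hclV : IsCompact (closure (interior N)) :=
    hNc.of_isClosed_subset isClosed_closure (closure_minimal interior_subset hNc.isClosed)
  set Mset : Set (Set X) := {H : Set X | IsClosed H ∧ (H ∩ closure (interior N)).Nonempty}
    with hMdef
  have hMc := fell_isCompact_meets hclV
  refine ⟨Subtype.val ⁻¹' Mset, ?_, ?_⟩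
  · rw [isCompact_iff_ultrafilter_le_nhds]
    intro f hf
    have hMf : Mset ∈ Ultrafilter.map Subtype.val f :=
      Ultrafilter.mem_map.2 (Filter.mem_of_superset (le_principal_iff.1 hf) (fun a ha => ha))
    obtain ⟨L, hLM, hLle⟩ :=
      (@isCompact_iff_ultrafilter_le_nhds (Set X) (fellTopology X) Mset).1 hMc
        (Ultrafilter.map Subtype.val f) (le_principal_iff.2 hMf)
    have hLCL : L ∈ CL X := ⟨⟨hLM.2.choose, hLM.2.choose_spec.1⟩, hLM.1⟩
    refine ⟨⟨L, hLCL⟩, hLM, ?_⟩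
    exact le_trans (Filter.map_le_iff_le_comap.1 hLle)
      (le_of_eq (@nhds_induced (Set X) (FellHyper X (CL X)) (fellTopology X)
        Subtype.val ⟨L, hLCL⟩).symm)
  · have hopen : @IsOpen (Set X) (fellTopology X) {H : Set X | (H ∩ interior N).Nonempty} :=
      TopologicalSpace.GenerateOpen.basic _ (Or.inl ⟨interior N, isOpen_interior, rfl⟩)
    refine mem_nhds_iff.2 ⟨Subtype.val ⁻¹' {H : Set X | (H ∩ interior N).Nonempty}, ?_, ?_, ?_⟩
    · intro B hB
      exact ⟨B.2.2, hB.mono (inter_subset_inter_right _ subset_closure)⟩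
    · exact fellHyper_isOpen_iff.2 ⟨_, hopen, rfl⟩
    · exact ⟨x, hx, hVx⟩

end Hyper

/-- In a locally compact Hausdorff space, a Gδ point has countably generated
neighborhood filter. -/
lemma countably_generated_of_gdelta {Y : Type v} [TopologicalSpace Y] [T2Space Y]
    [LocallyCompactSpace Y] (a : Y) (U : ℕ → Set Y) (hUo : ∀ n, IsOpen (U n))
    (hU : (⋂ n, U n) = {a}) : (𝓝 a).IsCountablyGenerated := by
  classical
  have haU : ∀ n, a ∈ U n := by
    intro n
    have : a ∈ ⋂ n, U n := by rw [hU]; exact rfl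
    exact mem_iInter.1 this n
  have key : ∀ s ∈ 𝓝 a, ∃ K, K ∈ 𝓝 a ∧ K ⊆ s ∧ IsCompact K := fun s hs =>
    local_compact_nhds hs
  choose! F hF1 hF2 hF3 using key
  let N : ℕ → Set Y := fun n => Nat.rec (F (U 0)) (fun n Nn => F (Nn ∩ U (n + 1))) n
  have hN0 : N 0 = F (U 0) := rfl
  have hNs : ∀ n, N (n + 1) = F (N n ∩ U (n + 1)) := fun n => rfl
  have hmem : ∀ n, N n ∈ 𝓝 a := by
    intro n
    induction n with
    | zero => exact hF1 _ ((hUo 0).mem_nhds (haU 0))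
    | succ n ih =>
      rw [hNs n]
      exact hF1 _ (Filter.inter_mem ih ((hUo (n + 1)).mem_nhds (haU (n + 1))))
  have hcomp : ∀ n, IsCompact (N n) := by
    intro n
    cases n with
    | zero => exact hF3 _ ((hUo 0).mem_nhds (haU 0))
    | succ n =>
      rw [hNs n]
      exact hF3 _ (Filter.inter_mem (hmem n) ((hUo (n + 1)).mem_nhds (haU (n + 1))))
  have hsubU : ∀ n, N n ⊆ U n := by
    intro n
    cases n with
    | zero => exact hF2 _ ((hUo 0).mem_nhds (haU 0))
    | succ n =>
      rw [hNs n]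
      exact (hF2 _ (Filter.inter_mem (hmem n) ((hUo (n + 1)).mem_nhds (haU (n + 1))))).trans
        inter_subset_right
  have hdec : ∀ n, N (n + 1) ⊆ N n := by
    intro n
    rw [hNs n]
    exact (hF2 _ (Filter.inter_mem (hmem n) ((hUo (n + 1)).mem_nhds (haU (n + 1))))).trans
      inter_subset_left
  have hanti : Antitone N := antitone_nat_of_succ_le hdec
  have hbasis : (𝓝 a).HasBasis (fun _ : ℕ => True) N := by
    constructor
    intro s
    constructor
    · intro hs
      obtain ⟨W, hWs, hWo, haW⟩ := mem_nhds_iff.1 hs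
      have hinter : N 0 ∩ ⋂ n, (N n ∩ Wᶜ) = ∅ := by
        rw [← subset_empty_iff]
        rintro x ⟨hx0, hx⟩
        rw [mem_iInter] at hx
        have hxa : x ∈ ⋂ n, U n := mem_iInter.2 fun n => hsubU n (hx n).1
        rw [hU, mem_singleton_iff] at hxa
        subst hxa
        exact (hx 0).2 haW
      obtain ⟨t, ht⟩ := (hcomp 0).elim_finite_subfamily_closed (fun n => N n ∩ Wᶜ)
        (fun n => ((hcomp n).isClosed).inter hWo.isClosed_compl) hinter
      refine ⟨t.sup id, trivial, fun x hx => hWs ?_⟩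
      by_contra hxW
      have hmem0 : x ∈ N 0 ∩ ⋂ n ∈ t, (N n ∩ Wᶜ) :=
        ⟨hanti (Nat.zero_le _) hx,
         mem_biInter fun n hn => ⟨hanti (Finset.le_sup (f := id) hn) hx, hxW⟩⟩
      rw [ht] at hmem0
      exact hmem0
    · rintro ⟨n, -, hns⟩
      exact Filter.mem_of_superset (hmem n) hns
  exact hbasis.isCountablyGenerated


/-- if `(CL(X), τ_F)` is Hausdorff and has countable pseudocharacter,
then it is first-countable. -/
theorem statement16 (X : Type u) [TopologicalSpace X] [T1Space X] [RegularSpace X]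
    (h2 : T2Space (FellHyper X (CL X)))
    (hψ : ∀ A : FellHyper X (CL X), ∃ U : ℕ → Set (FellHyper X (CL X)),
      (∀ n, IsOpen (U n)) ∧ (⋂ n, U n) = {A}) :
    FirstCountableTopology (FellHyper X (CL X)) := by
  haveI := h2
  haveI := fellHyper_weaklyLocallyCompact h2
  refine ⟨fun A => ?_⟩
  obtain ⟨U, hUo, hU⟩ := hψ A
  exact countably_generated_of_gdelta A U hUo hU
end

section
/- Let X be a T1 regular space. If the hyperspace CL(X) with the Fell topology is Hausdorff and has the compact-G_δ property (every compact subset of CL(X) is a G_δ-set in CL(X)), then CL(X) with the Fell topology is a D_0-space. -/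
open Set TopologicalSpace

universe u v

open Filter Topology

namespace FellHyper

variable {X : Type u} [TopologicalSpace X]

attribute [local instance] fellTopology

/-- The basic Fell-open set `𝒱⁻ ∩ (Mᶜ)⁺`, where `𝒱⁻ = ⋂ V ∈ 𝒱, V⁻`. -/
def basicOpen (𝒱 : Set (Set X)) (M : Set X) : Set (Set X) :=
  {H | (∀ V ∈ 𝒱, (H ∩ V).Nonempty) ∧ Disjoint H M}

theorem exists_basicOpen_of_isOpen_fellTopology {O : Set (Set X)}
    (hO : IsOpen O) {A : Set X} (hA : A ∈ O) :
    ∃ (𝒱 : Set (Set X)) (M : Set X), 𝒱.Finite ∧ (∀ V ∈ 𝒱, IsOpen V) ∧ IsCompact M ∧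
      A ∈ basicOpen 𝒱 M ∧ basicOpen 𝒱 M ⊆ O := by
  induction hO with
  | basic s hs =>
    rcases hs with ⟨U, hU, rfl⟩ | ⟨K, hK, rfl⟩
    · refine ⟨{U}, ∅, finite_singleton U, by simpa using hU, isCompact_empty,
        ⟨by simpa using hA, disjoint_empty _⟩, fun H hH => by simpa using hH.1⟩
    · exact ⟨∅, K, finite_empty, by simp, hK, ⟨by simp, subset_compl_iff_disjoint_right.mp hA⟩,
        fun H hH => subset_compl_iff_disjoint_right.mpr hH.2⟩
  | univ =>
    exact ⟨∅, ∅, finite_empty, by simp, isCompact_empty, ⟨by simp, disjoint_empty _⟩,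
      subset_univ _⟩
  | inter s t _ _ ihs iht =>
    obtain ⟨𝒱₁, M₁, hf₁, ho₁, hc₁, hA₁, hsub₁⟩ := ihs hA.1
    obtain ⟨𝒱₂, M₂, hf₂, ho₂, hc₂, hA₂, hsub₂⟩ := iht hA.2
    have hbasic : basicOpen (𝒱₁ ∪ 𝒱₂) (M₁ ∪ M₂) = basicOpen 𝒱₁ M₁ ∩ basicOpen 𝒱₂ M₂ := by
      ext H
      simp only [basicOpen, mem_union, disjoint_union_right, mem_inter_iff, mem_ofPred_eq]
      grind
    refine ⟨𝒱₁ ∪ 𝒱₂, M₁ ∪ M₂, hf₁.union hf₂, ?_, hc₁.union hc₂, ?_, ?_⟩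
    · rintro V (hV | hV)
      exacts [ho₁ V hV, ho₂ V hV]
    · rw [hbasic]
      exact ⟨hA₁, hA₂⟩
    · rw [hbasic]
      exact inter_subset_inter hsub₁ hsub₂
  | sUnion C _ ih =>
    obtain ⟨t, htC, hAt⟩ := hA
    obtain ⟨𝒱, M, hf, ho, hc, hA', hsub⟩ := ih t htC hAt
    exact ⟨𝒱, M, hf, ho, hc, hA', hsub.trans (subset_sUnion_of_mem htC)⟩

variable {S : Set (Set X)}

theorem exists_basicOpen_of_isOpen {O : Set (FellHyper X S)} (hO : IsOpen O)
    {a : FellHyper X S} (ha : a ∈ O) :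
    ∃ (𝒱 : Set (Set X)) (M : Set X), 𝒱.Finite ∧ (∀ V ∈ 𝒱, IsOpen V) ∧ IsCompact M ∧
      a.1 ∈ basicOpen 𝒱 M ∧ ∀ b : FellHyper X S, b.1 ∈ basicOpen 𝒱 M → b ∈ O := by
  obtain ⟨t, ht, rfl⟩ := (isOpen_induced_iff (t := fellTopology X)).mp hO
  obtain ⟨𝒱, M, hf, ho, hc, ha', hsub⟩ := exists_basicOpen_of_isOpen_fellTopology ht ha
  exact ⟨𝒱, M, hf, ho, hc, ha', fun b hb => hsub hb⟩

theorem isInducing_val_s17 : IsInducing (Subtype.val : FellHyper X S → Set X) :=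
  ⟨rfl⟩

theorem isOpen_setOf_inter_nonempty {U : Set X} (hU : IsOpen U) :
    IsOpen {a : FellHyper X S | (a.1 ∩ U).Nonempty} :=
  (isOpen_induced_iff (t := fellTopology X)).mpr
    ⟨_, isOpen_generateFrom_of_mem (Or.inl ⟨U, hU, rfl⟩), rfl⟩

theorem isOpen_setOf_disjoint {K : Set X} (hK : IsCompact K) :
    IsOpen {a : FellHyper X S | Disjoint a.1 K} := by
  refine (isOpen_induced_iff (t := fellTopology X)).mpr
    ⟨_, isOpen_generateFrom_of_mem (Or.inr ⟨K, hK, rfl⟩), ?_⟩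
  ext a
  exact subset_compl_iff_disjoint_right

def lowerLimit (f : Filter (Set X)) : Set X :=
  {x | ∀ U, IsOpen U → x ∈ U → {H : Set X | (H ∩ U).Nonempty} ∈ f}

theorem isClosed_lowerLimit (f : Filter (Set X)) : IsClosed (lowerLimit f) := by
  rw [← isOpen_compl_iff, isOpen_iff_forall_mem_open]
  intro x hx
  simp only [lowerLimit, mem_compl_iff, mem_ofPred_eq, not_forall] at hx
  obtain ⟨U, hU, hxU, hUf⟩ := hx
  exact ⟨U, fun y hyU hy => hUf (hy U hU hyU), hU, hxU⟩

theorem setOf_disjoint_mem_of_disjoint_lowerLimit (f : Ultrafilter (Set X)) {K : Set X}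
    (hK : IsCompact K) (h : Disjoint (lowerLimit (f : Filter (Set X))) K) :
    {H : Set X | Disjoint H K} ∈ f := by
  refine hK.induction_on (p := fun s => {H : Set X | Disjoint H s} ∈ f)
    (by simp only [disjoint_empty, ofPred_true]; exact univ_mem)
    (fun s t hst ht => mem_of_superset ht fun H hH => hH.mono_right hst)
    (fun s t hs ht => mem_of_superset (inter_mem hs ht) fun H hH => disjoint_union_right.mpr hH)
    fun x hxK => ?_
  have hx : x ∉ lowerLimit (f : Filter (Set X)) := h.notMem_of_mem_right hxK
  simp only [lowerLimit, mem_ofPred_eq, not_forall] at hx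
  obtain ⟨U, hU, hxU, hUf⟩ := hx
  refine ⟨U, mem_nhdsWithin_of_mem_nhds (hU.mem_nhds hxU), ?_⟩
  exact mem_of_superset (Ultrafilter.compl_mem_iff_notMem.mpr hUf) fun H hH =>
    disjoint_iff_inter_eq_empty.mpr (not_nonempty_iff_eq_empty.mp hH)

theorem ultrafilter_le_nhds_lowerLimit (f : Ultrafilter (Set X)) :
    (f : Filter (Set X)) ≤ 𝓝 (lowerLimit (f : Filter (Set X))) := by
  rw [← tendsto_id', fellTopology, tendsto_nhds_generateFrom_iff]
  rintro s (⟨U, hU, rfl⟩ | ⟨K, hK, rfl⟩) hs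
  · obtain ⟨x, hx, hxU⟩ := hs
    exact hx U hU hxU
  · exact mem_of_superset
      (setOf_disjoint_mem_of_disjoint_lowerLimit f hK (subset_compl_iff_disjoint_right.mp hs))
      fun H => subset_compl_iff_disjoint_right.mpr

instance compactSpace_closed : CompactSpace (FellHyper X {A : Set X | IsClosed A}) := by
  refine ⟨isCompact_iff_ultrafilter_le_nhds.mpr fun f _ => ?_⟩
  let g : Ultrafilter (Set X) := f.map Subtype.val
  refine ⟨(⟨lowerLimit (g : Filter (Set X)), isClosed_lowerLimit _⟩ : FellHyper X _),
    mem_univ _, ?_⟩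
  exact tendsto_id'.mp (isInducing_val_s17.tendsto_nhds_iff.mpr (ultrafilter_le_nhds_lowerLimit g))

theorem exists_disjoint_open_nhds_of_mem_of_notMem [LocallyCompactSpace X] {a b : FellHyper X S}
    (hb : IsClosed b.1) {p : X} (hpa : p ∈ a.1) (hpb : p ∉ b.1) :
    ∃ u v : Set (FellHyper X S), IsOpen u ∧ IsOpen v ∧ a ∈ u ∧ b ∈ v ∧ Disjoint u v := by
  obtain ⟨K, hK, hpK, hKb⟩ := exists_compact_subset hb.isOpen_compl hpb
  refine ⟨_, _, isOpen_setOf_inter_nonempty isOpen_interior, isOpen_setOf_disjoint hK,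
    ⟨p, hpa, hpK⟩, subset_compl_iff_disjoint_left.mp hKb, ?_⟩
  exact Set.disjoint_left.mpr fun c ⟨q, hqc, hqK⟩ hc =>
    Set.disjoint_left.mp hc hqc (interior_subset hqK)

theorem t2Space [LocallyCompactSpace X] (hS : ∀ A ∈ S, IsClosed A) : T2Space (FellHyper X S) := by
  refine ⟨fun a b hab => ?_⟩
  by_cases hsub : a.1 ⊆ b.1
  · obtain ⟨p, hpb, hpa⟩ := not_subset.mp fun h => hab (Subtype.ext (hsub.antisymm h))
    obtain ⟨u, v, hu, hv, hbu, hav, huv⟩ :=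
      exists_disjoint_open_nhds_of_mem_of_notMem (hS a.1 a.2) hpb hpa
    exact ⟨v, u, hv, hu, hav, hbu, huv.symm⟩
  · obtain ⟨p, hpa, hpb⟩ := not_subset.mp hsub
    exact exists_disjoint_open_nhds_of_mem_of_notMem (hS b.1 b.2) hpa hpb

def inclusion {T : Set (Set X)} (h : S ⊆ T) (a : FellHyper X S) : FellHyper X T :=
  ⟨a.1, h a.2⟩

theorem isInducing_inclusion_s17 {T : Set (Set X)} (h : S ⊆ T) : IsInducing (inclusion h) :=
  isInducing_val_s17.of_comp_iff.mp isInducing_val_s17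

theorem isOpenEmbedding_inclusion_CL :
    IsOpenEmbedding (inclusion fun _ (hA : _ ∈ CL X) => hA.2 :
      FellHyper X (CL X) → FellHyper X {A : Set X | IsClosed A}) := by
  refine ⟨⟨isInducing_inclusion_s17 _, fun a b h => Subtype.ext (congrArg Subtype.val h :)⟩, ?_⟩
  have hrange : range (inclusion fun _ (hA : _ ∈ CL X) => hA.2) =
      {c : FellHyper X {A : Set X | IsClosed A} | (c.1 ∩ univ).Nonempty} := by
    ext c
    simp only [inter_univ]
    exact ⟨by rintro ⟨a, rfl⟩; exact a.2.1, fun hc => ⟨⟨c.1, hc, c.2⟩, rfl⟩⟩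
  rw [hrange]
  exact isOpen_setOf_inter_nonempty isOpen_univ

end FellHyper

theorem Set.Finite.exists_finite_disjoint_forall_inter_nonempty {α : Type*} {𝒱 : Set (Set α)}
    (h𝒱 : 𝒱.Finite) {M : Set α} (h : ∀ V ∈ 𝒱, ¬ V ⊆ M) :
    ∃ T : Set α, T.Finite ∧ Disjoint T M ∧ ∀ V ∈ 𝒱, (T ∩ V).Nonempty := by
  choose w hwV hwM using fun V : 𝒱 => not_subset.mp (h V V.2)
  have := h𝒱.to_subtype
  refine ⟨range w, finite_range w, Set.disjoint_left.mpr ?_, fun V hV =>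
    ⟨w ⟨V, hV⟩, mem_range_self _, hwV ⟨V, hV⟩⟩⟩
  rintro _ ⟨V, rfl⟩
  exact hwM V

theorem weaklyLocallyCompactSpace_of_t2Space_fellHyper_CL (X : Type u) [TopologicalSpace X]
    [T1Space X] [T2Space (FellHyper X (CL X))] : WeaklyLocallyCompactSpace X := by
  refine ⟨fun z => ?_⟩
  rcases subsingleton_or_nontrivial X with _ | _
  · exact ⟨univ, subsingleton_univ.isCompact, univ_mem⟩
  by_contra! hz
  obtain ⟨y, hyz⟩ := exists_ne z
  let A : FellHyper X (CL X) := ⟨{y, z}, ⟨y, mem_insert _ _⟩, (toFinite _).isClosed⟩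
  let B : FellHyper X (CL X) := ⟨{y}, singleton_nonempty y, isClosed_singleton⟩
  have hAB : A ≠ B := fun h =>
    hyz (eq_of_mem_singleton (h ▸ (mem_insert_of_mem y rfl : z ∈ A.1) : z ∈ B.1)).symm
  obtain ⟨OA, OB, hOA, hOB, hA, hB, hdisj⟩ := t2_separation hAB
  obtain ⟨𝒱A, MA, hfA, hoA, hcA, ⟨hVA, hMA⟩, hsubA⟩ :=
    FellHyper.exists_basicOpen_of_isOpen hOA hA
  obtain ⟨𝒱B, MB, -, -, hcB, ⟨hVB, hMB⟩, hsubB⟩ := FellHyper.exists_basicOpen_of_isOpen hOB hB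
  have hy : y ∉ MA ∪ MB := by
    rintro (hy | hy)
    exacts [Set.disjoint_left.mp hMA (mem_insert _ _) hy, Set.disjoint_left.mp hMB rfl hy]
  -- each `V ∈ 𝒱A` contains `y ∉ MA ∪ MB`, or is a neighbourhood of `z`, which no compact set is
  have hescape : ∀ V ∈ 𝒱A, ¬ V ⊆ MA ∪ MB := by
    intro V hV hVM
    obtain ⟨q, hq | hq, hqV⟩ := hVA V hV
    · exact hy (hVM (hq ▸ hqV))
    · exact hz _ (hcA.union hcB) (mem_of_superset ((hoA V hV).mem_nhds (hq ▸ hqV)) hVM)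
  obtain ⟨T, hTf, hTM, hTV⟩ := hfA.exists_finite_disjoint_forall_inter_nonempty hescape
  let C : FellHyper X (CL X) := ⟨insert y T, insert_nonempty y T, (hTf.insert y).isClosed⟩
  have hCA : C ∈ OA := hsubA C ⟨fun V hV => (hTV V hV).mono (inter_subset_inter_left _
    (subset_insert _ _)), disjoint_insert_left.mpr ⟨fun h => hy (Or.inl h),
    hTM.mono_right subset_union_left⟩⟩
  have hCB : C ∈ OB := hsubB C ⟨fun V hV => ⟨y, mem_insert _ _, by
    obtain ⟨q, hq, hqV⟩ := hVB V hV; exact hq ▸ hqV⟩, disjoint_insert_left.mpr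
    ⟨fun h => hy (Or.inr h), hTM.mono_right subset_union_right⟩⟩
  exact Set.disjoint_left.mp hdisj hCA hCB

theorem isD0Space_of_compactGDeltaProperty {Y : Type v} [TopologicalSpace Y] [T2Space Y]
    [LocallyCompactSpace Y] (hG : CompactGDeltaProperty Y) : IsD0Space Y := by
  intro F _ hF
  obtain ⟨U, hUo, hFU⟩ := hG F hF
  choose L hLc hFL hLU using fun n =>
    exists_compact_between hF (hUo n) (hFU ▸ iInter_subset U n)
  refine ⟨fun n => ⋂ i ≤ n, interior (L i), fun n => ⟨(finite_Iic n).isOpen_biInter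
    fun i _ => isOpen_interior, subset_iInter₂ fun i _ => hFL i⟩, fun V hV hFV => ?_⟩
  -- the compact sets `⋂ i ≤ n, L i` decrease to `F`, so one of them lies in `V`
  obtain ⟨n, hn⟩ := exists_subset_nhds_of_isCompact' (V := fun n => ⋂ i ≤ n, L i)
    (Antitone.directed_ge fun m n hmn => biInter_subset_biInter_left (Iic_subset_Iic.mpr hmn))
    (fun n => (hLc n).of_isClosed_subset (isClosed_biInter fun i _ => (hLc i).isClosed)
      (biInter_subset_of_mem (mem_Iic.mpr le_rfl)))
    (fun n => isClosed_biInter fun i _ => (hLc i).isClosed)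
    fun x hx => hV.mem_nhds <| hFV <| hFU ▸ mem_iInter.mpr fun n =>
      hLU n (mem_iInter₂.mp (mem_iInter.mp hx n) n le_rfl)
  exact ⟨n, (biInter_mono subset_rfl fun i _ => interior_subset).trans hn⟩

/-- if `(CL(X), τ_F)` is Hausdorff and has the compact-`G_δ` property,
then it is a `D₀`-space. -/
theorem statement17 (X : Type u) [TopologicalSpace X] [T1Space X] [RegularSpace X]
    (h2 : T2Space (FellHyper X (CL X)))
    (hG : CompactGDeltaProperty (FellHyper X (CL X))) :
    IsD0Space (FellHyper X (CL X)) := by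
  have : WeaklyLocallyCompactSpace X := weaklyLocallyCompactSpace_of_t2Space_fellHyper_CL X
  have : T2Space (FellHyper X {A : Set X | IsClosed A}) := FellHyper.t2Space fun _ => id
  have : LocallyCompactSpace (FellHyper X (CL X)) :=
    FellHyper.isOpenEmbedding_inclusion_CL.locallyCompactSpace
  exact isD0Space_of_compactGDeltaProperty hG
end

section
/- Let X be a sequential T1 regular space. Then F(X), the set of nonempty finite subsets of X, is an open subset of the hyperspace K(X) of nonempty compact subsets with the Fell topology if and only if X is discrete. -/
open Set TopologicalSpace

universe u v

/-
If `p` is not isolated, sequentiality gives a sequence `uₙ → p` with `uₙ ≠ p`; a tail of it lies in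
any prescribed neighbourhood `W` of `p`, and together with `p` it forms an infinite compact set. On the
other hand, once compact sets are closed, every Fell-open set containing `{p}` contains all sets `H`
with `p ∈ H ⊆ W` for some open `W ∋ p`: the subbasic sets `U⁻` and `(Kᶜ)⁺` do so with `W = U` and
`W = Kᶜ`. So if `ℱ(X)` is open in `𝒦(X)`, each point has a neighbourhood in which every compact set
through it is finite, and the point must be isolated.
-/

open Filter Topology

lemma exists_isOpen_of_singleton_mem_fellOpen {X : Type u} [TopologicalSpace X] [T2Space X]
    {O : Set (Set X)} (hO : IsOpen[fellTopology X] O) {p : X} (hp : {p} ∈ O) :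
    ∃ W : Set X, IsOpen W ∧ p ∈ W ∧ ∀ H : Set X, p ∈ H → H ⊆ W → H ∈ O := by
  induction hO with
  | basic s hs =>
    rcases hs with ⟨U, hU, rfl⟩ | ⟨K, hK, rfl⟩
    · exact ⟨U, hU, singleton_inter_nonempty.1 hp, fun H hpH hHU => ⟨p, hpH, hHU hpH⟩⟩
    · exact ⟨Kᶜ, hK.isClosed.isOpen_compl, singleton_subset_iff.1 hp, fun H _ hHK => hHK⟩
  | univ => exact ⟨univ, isOpen_univ, mem_univ p, fun H _ _ => mem_univ H⟩
  | inter s t _ _ ihs iht =>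
    obtain ⟨V, hV, hpV, hVs⟩ := ihs hp.1
    obtain ⟨W, hW, hpW, hWt⟩ := iht hp.2
    exact ⟨V ∩ W, hV.inter hW, ⟨hpV, hpW⟩, fun H hpH hH =>
      ⟨hVs H hpH (hH.trans inter_subset_left), hWt H hpH (hH.trans inter_subset_right)⟩⟩
  | sUnion S _ ih =>
    obtain ⟨s, hsS, hps⟩ := hp
    obtain ⟨W, hW, hpW, hWs⟩ := ih s hsS hps
    exact ⟨W, hW, hpW, fun H hpH hHW => ⟨s, hsS, hWs H hpH hHW⟩⟩

lemma exists_seq_tendsto_ne_of_not_isOpen_singleton {X : Type u} [TopologicalSpace X]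
    [SequentialSpace X] {p : X} (hp : ¬IsOpen {p}) :
    ∃ u : ℕ → X, (∀ n, u n ≠ p) ∧ Tendsto u atTop (𝓝 p) := by
  have hns : ¬IsSeqClosed ({p}ᶜ : Set X) := fun h => hp (isClosed_compl_iff.1 h.isClosed)
  simp only [IsSeqClosed, not_forall, mem_compl_singleton_iff, not_not] at hns
  obtain ⟨u, _, hne, hu, rfl⟩ := hns
  exact ⟨u, hne, hu⟩

lemma infinite_range_of_tendsto_of_ne {X : Type u} [TopologicalSpace X] [T1Space X]
    {u : ℕ → X} {p : X} (hu : Tendsto u atTop (𝓝 p)) (hne : ∀ n, u n ≠ p) :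
    (range u).Infinite := fun hfin => by
  obtain ⟨n, hn⟩ : p ∈ range u :=
    hfin.isClosed.closure_subset (mem_closure_of_tendsto hu (.of_forall mem_range_self))
  exact hne n hn

lemma exists_infinite_isCompact_of_not_isOpen_singleton {X : Type u} [TopologicalSpace X]
    [T1Space X] [SequentialSpace X] {p : X} (hp : ¬IsOpen {p}) {W : Set X} (hW : W ∈ 𝓝 p) :
    ∃ K : Set X, IsCompact K ∧ p ∈ K ∧ K ⊆ W ∧ K.Infinite := by
  obtain ⟨u, hne, hu⟩ := exists_seq_tendsto_ne_of_not_isOpen_singleton hp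
  obtain ⟨N, hN⟩ := eventually_atTop.1 (hu.eventually_mem hW)
  have hv : Tendsto (fun n => u (n + N)) atTop (𝓝 p) := hu.comp (tendsto_add_atTop_nat N)
  refine ⟨insert p (range fun n => u (n + N)), hv.isCompact_insert_range, mem_insert p _, ?_,
    (infinite_range_of_tendsto_of_ne hv fun n => hne (n + N)).mono (subset_insert p _)⟩
  rintro y (rfl | ⟨n, rfl⟩)
  exacts [mem_of_mem_nhds hW, hN (n + N) (Nat.le_add_left N n)]

/-- for sequential `X`, `ℱ(X)` is open in `(𝒦(X), τ_F)` iff `X` is discrete. -/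
theorem statement18 (X : Type u) [TopologicalSpace X] [T1Space X] [RegularSpace X]
    [SequentialSpace X] :
    IsOpen {A : FellHyper X (Kcal X) | A.carrier.Finite} ↔ DiscreteTopology X := by
  refine ⟨fun hF => discreteTopology_iff_isOpen_singleton.2 fun p => ?_, fun _ => ?_⟩
  · obtain ⟨O, hO, hOF⟩ := (isOpen_induced_iff (t := fellTopology X)).1 hF
    have hFO : ∀ K (hK : K ∈ Kcal X), K ∈ O ↔ K.Finite := fun K hK =>
      Set.ext_iff.1 hOF ⟨K, hK⟩
    obtain ⟨W, hW, hpW, hWO⟩ := exists_isOpen_of_singleton_mem_fellOpen hO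
      ((hFO {p} ⟨singleton_nonempty p, isCompact_singleton⟩).2 (finite_singleton p))
    by_contra hp
    obtain ⟨K, hK, hpK, hKW, hKinf⟩ :=
      exists_infinite_isCompact_of_not_isOpen_singleton hp (hW.mem_nhds hpW)
    exact hKinf ((hFO K ⟨⟨p, hpK⟩, hK⟩).1 (hWO K hpK hKW))
  · convert isOpen_univ
    exact eq_univ_of_forall fun A => A.2.2.finite_of_discrete
end

section
/- Let X be a T1 regular space. Then no point of K(X) \ F(X), the set of nonempty infinite compact subsets of X, is an isolated point of the subspace K(X) \ F(X) of the hyperspace K(X) with the Fell topology. -/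
open Set TopologicalSpace

universe u v

/-!
A Fell-open set containing `A` already contains every `B` with `P ⊆ B ⊆ A` for some finite
`P ⊆ A`: the sets `U⁻` only ask for one point of `A ∩ U`, and `(Kᶜ)⁺` is closed under subsets.
In a regular T1 space, an infinite compact `A` has such a `B` that is infinite, compact and
different from `A`, so `{A}` cannot be open among the infinite compact sets.
-/

open Topology

theorem exists_finite_subset_forall_mem_of_isOpen_fell {X : Type u} [TopologicalSpace X]
    {W : Set (Set X)} (hW : IsOpen[fellTopology X] W) {A : Set X} (hA : A ∈ W) :
    ∃ P ⊆ A, P.Finite ∧ ∀ B, P ⊆ B → B ⊆ A → B ∈ W := by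
  induction hW generalizing A with
  | basic s hs =>
    rcases hs with ⟨U, -, rfl⟩ | ⟨K, -, rfl⟩
    · obtain ⟨x, hxA, hxU⟩ := hA
      exact ⟨{x}, singleton_subset_iff.mpr hxA, finite_singleton x,
        fun B hPB _ => ⟨x, hPB rfl, hxU⟩⟩
    · exact ⟨∅, empty_subset A, finite_empty, fun B _ hBA => hBA.trans hA⟩
  | univ => exact ⟨∅, empty_subset A, finite_empty, fun B _ _ => mem_univ B⟩
  | inter s t _ _ ihs iht =>
    obtain ⟨P, hPA, hP, hPs⟩ := ihs hA.1
    obtain ⟨Q, hQA, hQ, hQt⟩ := iht hA.2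
    exact ⟨P ∪ Q, union_subset hPA hQA, hP.union hQ, fun B hB hBA =>
      ⟨hPs B (subset_union_left.trans hB) hBA, hQt B (subset_union_right.trans hB) hBA⟩⟩
  | sUnion S _ ih =>
    obtain ⟨s, hsS, hAs⟩ := hA
    obtain ⟨P, hPA, hP, hPs⟩ := ih s hsS hAs
    exact ⟨P, hPA, hP, fun B hPB hBA => ⟨s, hsS, hPs B hPB hBA⟩⟩

theorem IsCompact.exists_infinite_isCompact_between_ne {X : Type u} [TopologicalSpace X]
    [T1Space X] [RegularSpace X] {A P : Set X} (hA : IsCompact A) (hAinf : A.Infinite)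
    (hPA : P ⊆ A) (hP : P.Finite) :
    ∃ B, IsCompact B ∧ B.Infinite ∧ P ⊆ B ∧ B ⊆ A ∧ B ≠ A := by
  obtain ⟨a, haA, haP⟩ := (hAinf.sdiff hP).nonempty
  obtain ⟨a', ⟨ha'A, ha'P⟩, ha'a⟩ := ((hAinf.sdiff hP).sdiff (finite_singleton a)).nonempty
  have ha : a ∈ (insert a' P)ᶜ := by
    rintro (rfl | h)
    exacts [ha'a rfl, haP h]
  obtain ⟨D, hDa, hDclosed, hDsub⟩ := exists_mem_nhds_isClosed_subset
    ((hP.insert a').isClosed.isOpen_compl.mem_nhds ha)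
  -- Both pieces contain `P`; the first misses `a`, the second misses `a'`.
  set B₁ := A \ interior D
  set B₂ := A ∩ D ∪ P
  have hPD : ∀ x ∈ P, x ∉ D := fun x hx hxD => hDsub hxD (mem_insert_of_mem a' hx)
  have hcover : A ⊆ B₁ ∪ B₂ := fun x hx =>
    (em (x ∈ interior D)).elim (fun h => Or.inr (Or.inl ⟨hx, interior_subset h⟩))
      (fun h => Or.inl ⟨hx, h⟩)
  rcases infinite_union.mp (hAinf.mono hcover) with h₁ | h₂
  · refine ⟨B₁, hA.diff isOpen_interior, h₁,
      fun x hx => ⟨hPA hx, fun h => hPD x hx (interior_subset h)⟩, sdiff_subset, fun h => ?_⟩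
    exact (h ▸ haA : a ∈ B₁).2 (mem_interior_iff_mem_nhds.mpr hDa)
  · refine ⟨B₂, (hA.inter_right hDclosed).union hP.isCompact, h₂, subset_union_right,
      union_subset inter_subset_left hPA, fun h => ?_⟩
    rcases (h ▸ ha'A : a' ∈ B₂) with h' | h'
    exacts [hDsub h'.2 (mem_insert a' P), ha'P h']

/-- no point of `𝒦(X) \ ℱ(X)` is isolated in the Fell topology. -/
theorem statement19 (X : Type u) [TopologicalSpace X] [T1Space X] [RegularSpace X]
    (A : FellHyper X (Kcal X \ Fcal X)) :
    ¬ IsOpen ({A} : Set (FellHyper X (Kcal X \ Fcal X))) := by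
  intro hopen
  obtain ⟨W, hW, hWA⟩ := (@isOpen_induced_iff _ _ (fellTopology X) _ _).mp hopen
  have hAW : A.val ∈ W := (hWA.symm ▸ rfl : A ∈ Subtype.val ⁻¹' W)
  obtain ⟨⟨hAne, hAc⟩, hAfin⟩ := A.2
  have hAinf : A.val.Infinite := fun h => hAfin ⟨hAne, h⟩
  obtain ⟨P, hPA, hP, hPW⟩ := exists_finite_subset_forall_mem_of_isOpen_fell hW hAW
  obtain ⟨B, hBc, hBinf, hPB, hBA, hBne⟩ :=
    hAc.exists_infinite_isCompact_between_ne hAinf hPA hP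
  let B' : FellHyper X (Kcal X \ Fcal X) := ⟨B, ⟨hBinf.nonempty, hBc⟩, fun h => hBinf h.2⟩
  have hB'A : B' ∈ ({A} : Set _) := by
    rw [← hWA]
    exact hPW B hPB hBA
  exact hBne (congrArg Subtype.val hB'A)
end
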